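/- arXiv:1904.09694 — 10 statements merged into one kernel-verified Lean document; each statement's English description precedes it below -/
import Mathlib

section
/- Let n be a positive integer, let s be a list of permutations of Fin n that is permutationally complete, and let w be a list of permutations of Fin n containing s as a subsequence (i.e., s is a sublist of w). Then w is permutationally complete. -/
/-- The set of products (compositions, in order) of all rearrangements of `s`. -/
def ProdSet {n : ℕ} (s : List (Equiv.Perm (Fin n))) : Set (Equiv.Perm (Fin n)) :=
  {g | ∃ r : List (Equiv.Perm (Fin n)), r.Perm s ∧ r.prod = g}

/-- `s` is permutationally complete iff `ProdSet s` is the set of even permutations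
or the set of odd permutations. -/
def PermComplete {n : ℕ} (s : List (Equiv.Perm (Fin n))) : Prop :=
  ProdSet s = {g | Equiv.Perm.sign g = 1} ∨ ProdSet s = {g | Equiv.Perm.sign g = -1}

/-- `u` is a transpositional sequence: each term is a transposition. -/
def IsTranspositional {n : ℕ} (u : List (Equiv.Perm (Fin n))) : Prop :=
  ∀ g ∈ u, ∃ x y : Fin n, x ≠ y ∧ g = Equiv.swap x y

/-- The simple graph of a transpositional sequence: an edge `{x,y}` iff `(x y)` occurs in `u`. -/
def TranspGraph {n : ℕ} (u : List (Equiv.Perm (Fin n))) : SimpleGraph (Fin n) where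
  Adj x y := x ≠ y ∧ Equiv.swap x y ∈ u
  symm := by
    constructor
    intro x y h
    exact ⟨h.1.symm, by rw [Equiv.swap_comm]; exact h.2⟩
  loopless := by
    constructor
    intro x h
    exact h.1 rfl

/-- `s` is conjugacy invariant iff all elements of `ProdSet s` are pairwise conjugate. -/
def ConjInv {n : ℕ} (s : List (Equiv.Perm (Fin n))) : Prop :=
  ∀ f ∈ ProdSet s, ∀ g ∈ ProdSet s, IsConj f g

/-!
The sign is a homomorphism to the abelian group `ℤˣ`, so every element of `Prod(s)` has the
sign of `s.prod`; thus `s` is perm-complete iff `Prod(s)` is the whole coset of `Alt(n)`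
containing `s.prod`. If `w` is a rearrangement of `s ++ t` and `g` has the sign of
`w.prod`, then `g * t.prod⁻¹` has the sign of `s.prod`, hence is a product of a
rearrangement `r` of `s`, and `g` is the product of the rearrangement `r ++ t` of `w`.
-/

open Equiv Equiv.Perm

variable {n : ℕ}

lemma sign_prod_eq_of_perm {r s : List (Perm (Fin n))} (h : r.Perm s) :
    sign r.prod = sign s.prod := by
  rw [sign.map_list_prod, sign.map_list_prod]
  exact (h.map _).prod_eq

lemma prod_mem_prodSet (s : List (Perm (Fin n))) : s.prod ∈ ProdSet s :=
  ⟨s, List.Perm.refl s, rfl⟩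

lemma sign_eq_of_mem_prodSet {s : List (Perm (Fin n))} {g : Perm (Fin n)}
    (hg : g ∈ ProdSet s) : sign g = sign s.prod := by
  obtain ⟨r, hr, rfl⟩ := hg
  exact sign_prod_eq_of_perm hr

lemma mul_mem_prodSet_append {s t : List (Perm (Fin n))} {f g : Perm (Fin n)}
    (hf : f ∈ ProdSet s) (hg : g ∈ ProdSet t) : f * g ∈ ProdSet (s ++ t) := by
  obtain ⟨r, hr, rfl⟩ := hf
  obtain ⟨r', hr', rfl⟩ := hg
  exact ⟨r ++ r', hr.append hr', List.prod_append⟩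

lemma prodSet_eq_of_perm {s s' : List (Perm (Fin n))} (h : s.Perm s') :
    ProdSet s = ProdSet s' := by
  ext g
  exact ⟨fun ⟨r, hr, hg⟩ => ⟨r, hr.trans h, hg⟩, fun ⟨r, hr, hg⟩ => ⟨r, hr.trans h.symm, hg⟩⟩

lemma permComplete_iff {s : List (Perm (Fin n))} :
    PermComplete s ↔ ProdSet s = {g | sign g = sign s.prod} := by
  constructor
  · rintro (h | h) <;>
    · have hsign : s.prod ∈ ProdSet s := prod_mem_prodSet s
      rw [h, Set.mem_ofPred_eq] at hsign
      rw [h, hsign]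
  · intro h
    rcases Int.units_eq_one_or (sign s.prod) with hsign | hsign
    · exact Or.inl (hsign ▸ h)
    · exact Or.inr (hsign ▸ h)

lemma PermComplete.of_perm {s s' : List (Perm (Fin n))} (hs : PermComplete s)
    (h : s.Perm s') : PermComplete s' := by
  unfold PermComplete at hs ⊢
  rwa [← prodSet_eq_of_perm h]

lemma PermComplete.append {s : List (Perm (Fin n))} (hs : PermComplete s)
    (t : List (Perm (Fin n))) : PermComplete (s ++ t) := by
  rw [permComplete_iff] at hs ⊢
  refine Set.Subset.antisymm (fun g hg => sign_eq_of_mem_prodSet hg) fun g hg => ?_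
  have hgt : g * t.prod⁻¹ ∈ ProdSet s := by
    rw [hs, Set.mem_ofPred_eq, map_mul, map_inv, Set.mem_ofPred_eq.mp hg, List.prod_append,
      map_mul, mul_inv_cancel_right]
  simpa using mul_mem_prodSet_append hgt (prod_mem_prodSet t)

theorem stmt_0_general (n : ℕ)
    (s w : List (Equiv.Perm (Fin n)))
    (hsub : s.Sublist w)
    (hpc : PermComplete s) :
    PermComplete w := by
  obtain ⟨t, hw⟩ := hsub.exists_perm_append
  exact (hpc.append t).of_perm hw.symm

theorem stmt_0 (n : ℕ) (hn : 0 < n)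
    (s w : List (Equiv.Perm (Fin n)))
    (hsub : s.Sublist w)
    (hpc : PermComplete s) :
    PermComplete w :=
  stmt_0_general n s w hsub hpc
end

section
/- Let n ≥ 3 and let u be an injective transpositional sequence on Fin n such that every vertex of Fin n lies in the support of some term of u, the graph G(u) is connected, and some vertex a lies in the support of exactly one term of u (i.e., a has degree 1 in G(u)). Then u is not permutationally complete. In particular, no injective transpositional sequence whose graph is a tree on n ≥ 3 vertices is permutationally complete. -/
/-!
A vertex `a` of degree one in `G(u)` is moved by exactly one term `t` of `u`. All other terms
fix `a`, so every rearranged product `p * t * q` sends `a` to `p (t a) ≠ p a = a`. Hence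
`Prod(u)` contains neither the identity nor any transposition `(x y)` with `x, y ≠ a`, and
such a transposition exists once `n ≥ 3`. A tree on at least two vertices has a leaf.
-/

namespace Equiv.Perm

variable {α : Type*}

theorem list_prod_apply_eq_self {l : List (Perm α)} {a : α} (h : ∀ t ∈ l, t a = a) :
    l.prod a = a := by
  induction l with
  | nil => rfl
  | cons t s ih =>
    rw [List.prod_cons, mul_apply, ih fun g hg => h g (List.mem_cons_of_mem t hg),
      h t List.mem_cons_self]

theorem list_prod_apply_ne_self [DecidableEq α] [Fintype α] {l : List (Perm α)} {a : α}
    (h : l.countP (fun t => decide (a ∈ t.support)) = 1) : l.prod a ≠ a := by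
  induction l with
  | nil => simp at h
  | cons t s ih =>
    rw [List.countP_cons] at h
    rw [List.prod_cons, mul_apply]
    by_cases ht : a ∈ t.support
    · have hs : s.countP (fun t => decide (a ∈ t.support)) = 0 := by simpa [ht] using h
      rw [list_prod_apply_eq_self fun g hg => by
        simpa [mem_support] using List.countP_eq_zero.mp hs g hg]
      exact mem_support.mp ht
    · have hta : t a = a := notMem_support.mp ht
      conv_rhs => rw [← hta]
      exact t.injective.ne (ih (by simpa [ht] using h))

theorem swap_eq_swap_apply_of_mem_support [DecidableEq α] [Fintype α] {x y a : α} (hxy : x ≠ y)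
    (ha : a ∈ (Equiv.swap x y).support) : Equiv.swap x y = Equiv.swap a (Equiv.swap x y a) := by
  rw [support_swap hxy, Finset.mem_insert, Finset.mem_singleton] at ha
  rcases ha with rfl | rfl
  · rw [Equiv.swap_apply_left]
  · rw [Equiv.swap_apply_right, Equiv.swap_comm]

end Equiv.Perm

theorem apply_ne_self_of_mem_prodSet {n : ℕ} {s : List (Equiv.Perm (Fin n))} {a : Fin n}
    (ha : s.countP (fun t => decide (a ∈ t.support)) = 1) {g : Equiv.Perm (Fin n)}
    (hg : g ∈ ProdSet s) : g a ≠ a := by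
  obtain ⟨r, hr, rfl⟩ := hg
  exact Equiv.Perm.list_prod_apply_ne_self (hr.countP_eq _ ▸ ha)

theorem not_permComplete_of_forall_apply_ne {n : ℕ} (hn : 3 ≤ n) {s : List (Equiv.Perm (Fin n))}
    (a : Fin n) (h : ∀ g ∈ ProdSet s, g a ≠ a) : ¬ PermComplete s := by
  obtain ⟨x, hx, y, hy, hxy⟩ : ∃ x ∈ Finset.univ.erase a, ∃ y ∈ Finset.univ.erase a, x ≠ y := by
    rw [← Finset.one_lt_card, Finset.card_erase_of_mem (Finset.mem_univ a), Finset.card_fin]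
    omega
  have hswap : Equiv.swap x y a = a :=
    Equiv.swap_apply_of_ne_of_ne (Finset.ne_of_mem_erase hx).symm (Finset.ne_of_mem_erase hy).symm
  rintro (heven | hodd)
  · exact h 1 (by simp [heven]) rfl
  · exact h _ (by simp [hodd, Equiv.Perm.sign_swap hxy]) hswap

/-- The terms of `u` moving `a` correspond to the neighbours of `a` via `t ↦ t a`. -/
theorem countP_mem_support_eq_degree {n : ℕ} {u : List (Equiv.Perm (Fin n))}
    (hu : IsTranspositional u) (hnd : u.Nodup) (a : Fin n) [DecidableRel (TranspGraph u).Adj] :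
    u.countP (fun t => decide (a ∈ t.support)) = (TranspGraph u).degree a := by
  have hswap : ∀ t ∈ u, a ∈ t.support → t = Equiv.swap a (t a) := by
    intro t ht hat
    obtain ⟨x, y, hxy, rfl⟩ := hu t ht
    exact Equiv.Perm.swap_eq_swap_apply_of_mem_support hxy hat
  rw [List.countP_eq_length_filter, ← List.toFinset_card_of_nodup (hnd.filter _),
    SimpleGraph.degree]
  apply Finset.card_bij' (fun t _ => t a) (fun b _ => Equiv.swap a b)
  · intro t ht
    simp only [List.mem_toFinset, List.mem_filter, decide_eq_true_eq] at ht
    rw [SimpleGraph.mem_neighborFinset]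
    exact ⟨(Equiv.Perm.mem_support.mp ht.2).symm, hswap t ht.1 ht.2 ▸ ht.1⟩
  · intro b hb
    obtain ⟨hab, hmem⟩ := (SimpleGraph.mem_neighborFinset _ _ _).mp hb
    simp only [List.mem_toFinset, List.mem_filter, decide_eq_true_eq]
    exact ⟨hmem, by rw [Equiv.Perm.mem_support, Equiv.swap_apply_left]; exact hab.symm⟩
  · intro t ht
    simp only [List.mem_toFinset, List.mem_filter, decide_eq_true_eq] at ht
    exact (hswap t ht.1 ht.2).symm
  · intro b _
    exact Equiv.swap_apply_left a b

theorem stmt_1 :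
    (∀ n : ℕ, 3 ≤ n → ∀ u : List (Equiv.Perm (Fin n)),
      IsTranspositional u → u.Nodup →
      (∀ v : Fin n, ∃ g ∈ u, v ∈ g.support) →
      (TranspGraph u).Connected →
      (∃ a : Fin n, u.countP (fun t => decide (a ∈ t.support)) = 1) →
      ¬ PermComplete u) ∧
    (∀ n : ℕ, 3 ≤ n → ∀ u : List (Equiv.Perm (Fin n)),
      IsTranspositional u → u.Nodup →
      (TranspGraph u).IsTree →
      ¬ PermComplete u) := by
  have of_countP_eq_one : ∀ n : ℕ, 3 ≤ n → ∀ (u : List (Equiv.Perm (Fin n))) (a : Fin n),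
      u.countP (fun t => decide (a ∈ t.support)) = 1 → ¬ PermComplete u :=
    fun n hn u a ha =>
      not_permComplete_of_forall_apply_ne hn a fun _ => apply_ne_self_of_mem_prodSet ha
  refine ⟨fun n hn u _ _ _ _ ⟨a, ha⟩ => of_countP_eq_one n hn u a ha, ?_⟩
  intro n hn u hu hnd htree
  classical
  have : Nontrivial (Fin n) := Fin.nontrivial_iff_two_le.mpr (by omega)
  obtain ⟨a, ha⟩ := htree.exists_vert_degree_one_of_nontrivial
  exact of_countP_eq_one n hn u a (countP_mem_support_eq_degree hu hnd a ▸ ha)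
end

section
/- Let n ≥ 4 and let u be an injective transpositional sequence on Fin n such that every vertex of Fin n lies in the support of some term of u and the graph G(u) is connected. Suppose there are vertices x ≠ y such that the transposition (x y) is a term of u and each of x and y lies in the support of exactly two terms of u (i.e., x and y are adjacent vertices of degree 2 in G(u)). Then u is not permutationally complete. -/
/-!
The only terms of `u` moving `x` or `y` are `(x y)`, `(x a)` and `(y b)` with `a, b ∉ {x, y}`.
Follow the points `x` and `y` through a product, recording only whether each currently sits at
`x`, at `y` or elsewhere. The point `x` comes back home only if these three transpositions act in
the order `(x a), (y b), (x y)` or `(x y), (y b), (x a)`, and `y` only for `(y b), (x a), (x y)` or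
`(x y), (x a), (y b)`; so no element of `Prod(u)` fixes both `x` and `y`. But for `n ≥ 4` both the
even and the odd permutations contain such an element: the identity, and a transposition of two
points outside `{x, y}`.
-/

open Equiv

namespace SwapTracking

inductive Loc
  | atX | atY | away
  deriving DecidableEq

inductive KeySwap
  | xy | xa | yb
  deriving DecidableEq

variable {α : Type*} [DecidableEq α]

def Loc.of (x y v : α) : Loc :=
  if v = x then .atX else if v = y then .atY else .away

def KeySwap.perm (x y a b : α) : KeySwap → Perm α
  | .xy => swap x y
  | .xa => swap x a
  | .yb => swap y b

/-- `away → atX` under `(x a)` happens only to the point `a`, and `away → atY` under `(y b)` only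
to `b`. -/
def KeySwap.move : KeySwap → Loc → List Loc
  | .xy, .atX => [.atY]
  | .xy, .atY => [.atX]
  | .xy, .away => [.away]
  | .xa, .atX => [.away]
  | .xa, .atY => [.atY]
  | .xa, .away => [.away, .atX]
  | .yb, .atX => [.atX]
  | .yb, .atY => [.away]
  | .yb, .away => [.away, .atY]

/-- The possible locations of the images of `x` and `y` under a product whose factors other than
`(x y), (x a), (y b)` fix `x` and `y`, when those three factors occur in the order `w`. -/
def reach : List KeySwap → List (Loc × Loc)
  | [] => [(.atX, .atY)]
  | s :: w => (reach w).flatMap fun p =>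
      (s.move p.1).flatMap fun l₁ => (s.move p.2).map fun l₂ => (l₁, l₂)

theorem pair_notMem_reach_of_perm {w : List KeySwap} (hw : w.Perm [.xy, .xa, .yb]) :
    (Loc.atX, Loc.atY) ∉ reach w := by
  have key : ∀ w ∈ [KeySwap.xy, .xa, .yb].permutations', (Loc.atX, Loc.atY) ∉ reach w := by
    decide
  exact key w (List.mem_permutations'.mpr hw)

variable {x y a b : α}

theorem Loc.of_apply_of_fixes {g : Perm α} (hx : g x = x) (hy : g y = y) (v : α) :
    Loc.of x y (g v) = Loc.of x y v := by
  have hvx : g v = x ↔ v = x := by nth_rw 1 [← hx]; exact g.apply_eq_iff_eq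
  have hvy : g v = y ↔ v = y := by nth_rw 1 [← hy]; exact g.apply_eq_iff_eq
  simp only [Loc.of, hvx, hvy]

theorem Loc.of_perm_mem_move (hxy : x ≠ y) (hax : a ≠ x) (hay : a ≠ y) (hbx : b ≠ x)
    (hby : b ≠ y) (s : KeySwap) (v : α) :
    Loc.of x y (s.perm x y a b v) ∈ s.move (Loc.of x y v) := by
  cases s <;> simp only [KeySwap.perm, Loc.of, swap_apply_def] <;> split_ifs <;>
    simp_all [KeySwap.move]

theorem KeySwap.perm_injective (hxy : x ≠ y) (hax : a ≠ x) (hay : a ≠ y) (hbx : b ≠ x) :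
    Function.Injective (KeySwap.perm x y a b) := by
  intro s t h
  cases s <;> cases t <;> simp only [KeySwap.perm] at h <;>
    first
    | rfl
    | have hx := congr($h x); have hy := congr($h y)
      simp [swap_apply_of_ne_of_ne, hxy, hxy.symm, hax, hax.symm, hay, hay.symm, hbx.symm] at hx hy

open scoped Classical in
noncomputable def KeySwap.classify (x y a b : α) (g : Perm α) : Option KeySwap :=
  [KeySwap.xy, .xa, .yb].find? fun s => s.perm x y a b = g

theorem KeySwap.perm_of_classify_eq_some {g : Perm α} {s : KeySwap}
    (h : KeySwap.classify x y a b g = some s) : s.perm x y a b = g := by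
  simpa using List.find?_some h

theorem KeySwap.classify_eq_none {g : Perm α} :
    KeySwap.classify x y a b g = none ↔ ∀ s : KeySwap, s.perm x y a b ≠ g := by
  refine List.find?_eq_none.trans ⟨fun h s => ?_, fun h s _ => by simpa using h s⟩
  cases s <;> simpa using h _ (by simp)

theorem KeySwap.classify_perm (hxy : x ≠ y) (hax : a ≠ x) (hay : a ≠ y) (hbx : b ≠ x)
    (s : KeySwap) : KeySwap.classify x y a b (s.perm x y a b) = some s := by
  have hinj : ∀ t t' : KeySwap, t.perm x y a b = t'.perm x y a b ↔ t = t' :=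
    fun _ _ => (KeySwap.perm_injective hxy hax hay hbx).eq_iff
  cases s <;> simp [KeySwap.classify, hinj]

theorem pair_mem_reach_classify (hxy : x ≠ y) (hax : a ≠ x) (hay : a ≠ y) (hbx : b ≠ x)
    (hby : b ≠ y) {r : List (Perm α)}
    (hfix : ∀ g ∈ r, KeySwap.classify x y a b g = none → g x = x ∧ g y = y) :
    (Loc.of x y (r.prod x), Loc.of x y (r.prod y)) ∈
      reach (r.filterMap (KeySwap.classify x y a b)) := by
  induction r with
  | nil => simp [reach, Loc.of, hxy.symm]
  | cons g r ih =>
    have ih := ih fun g' hg' => hfix g' (List.mem_cons_of_mem g hg')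
    rw [List.prod_cons, List.filterMap_cons, Perm.mul_apply, Perm.mul_apply]
    cases hg : KeySwap.classify x y a b g with
    | none =>
      obtain ⟨hgx, hgy⟩ := hfix g List.mem_cons_self hg
      simpa only [Loc.of_apply_of_fixes hgx hgy] using ih
    | some s =>
      obtain rfl := KeySwap.perm_of_classify_eq_some hg
      simp only [reach, List.mem_flatMap, List.mem_map]
      exact ⟨_, ih, _, Loc.of_perm_mem_move hxy hax hay hbx hby s _, _,
        Loc.of_perm_mem_move hxy hax hay hbx hby s _, rfl⟩

theorem prod_apply_ne_or_prod_apply_ne (hxy : x ≠ y) (hax : a ≠ x) (hay : a ≠ y)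
    (hbx : b ≠ x) (hby : b ≠ y) {r : List (Perm α)} (hr : r.Nodup)
    (hxyr : swap x y ∈ r) (hxar : swap x a ∈ r) (hybr : swap y b ∈ r)
    (hfix : ∀ g ∈ r, g ≠ swap x y → g ≠ swap x a → g ≠ swap y b → g x = x ∧ g y = y) :
    r.prod x ≠ x ∨ r.prod y ≠ y := by
  have hword : (r.filterMap (KeySwap.classify x y a b)).Perm [.xy, .xa, .yb] := by
    refine (List.perm_ext_iff_of_nodup (hr.filterMap fun g g' s hg hg' => ?_) (by decide)).mpr
      fun s => ⟨fun _ => by cases s <;> simp, fun _ => List.mem_filterMap.mpr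
        ⟨_, ?_, KeySwap.classify_perm hxy hax hay hbx s⟩⟩
    · rw [← KeySwap.perm_of_classify_eq_some hg, KeySwap.perm_of_classify_eq_some hg']
    · cases s <;> assumption
  have hloc := pair_mem_reach_classify hxy hax hay hbx hby (r := r) fun g hg hnone => by
    have h := KeySwap.classify_eq_none.mp hnone
    exact hfix g hg (h .xy).symm (h .xa).symm (h .yb).symm
  by_contra! hfixed
  rw [hfixed.1, hfixed.2] at hloc
  simp only [Loc.of, if_pos, if_neg hxy.symm] at hloc
  exact pair_notMem_reach_of_perm hword hloc

theorem exists_swap_of_countP_mem_support_eq_two [Fintype α] {u : List (Perm α)}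
    (htr : ∀ g ∈ u, g.IsSwap) (hnd : u.Nodup) (hxy : x ≠ y) (hmem : swap x y ∈ u)
    (hdx : u.countP (fun t => decide (x ∈ t.support)) = 2) :
    ∃ a, a ≠ x ∧ a ≠ y ∧ swap x a ∈ u ∧ ∀ g ∈ u, g x ≠ x → g = swap x y ∨ g = swap x a := by
  set F := u.filter (fun t => decide (x ∈ t.support))
  have hF : ∀ g, g ∈ F ↔ g ∈ u ∧ g x ≠ x := by simp [F, Perm.mem_support]
  have hFerase : ∀ g, g ∈ F.erase (swap x y) ↔ g ≠ swap x y ∧ g ∈ F :=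
    fun _ => (hnd.filter _).mem_erase_iff
  have hlen : (F.erase (swap x y)).length = 1 := by
    rw [List.length_erase_of_mem ((hF _).2 ⟨hmem, by simp [hxy.symm]⟩),
      ← List.countP_eq_length_filter, hdx]
  obtain ⟨q, hq⟩ := List.length_eq_one_iff.mp hlen
  have hmoves : ∀ g ∈ u, g x ≠ x → g = swap x y ∨ g = q := by
    intro g hg hgx
    by_cases h : g = swap x y
    · exact .inl h
    · have hg' := (hFerase g).2 ⟨h, (hF g).2 ⟨hg, hgx⟩⟩
      rw [hq, List.mem_singleton] at hg'
      exact .inr hg'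
  obtain ⟨hqne, hqF⟩ := (hFerase q).1 (by simp [hq])
  obtain ⟨hqu, hqx⟩ := (hF q).1 hqF
  obtain ⟨e, f, hef, rfl⟩ := htr q hqu
  obtain ⟨-, rfl | rfl⟩ := swap_apply_ne_self_iff.mp hqx
  · exact ⟨f, hef.symm, fun h => hqne (h ▸ rfl), hqu, hmoves⟩
  · rw [swap_comm e x] at hqne hqu hmoves
    exact ⟨e, hef, fun h => hqne (h ▸ rfl), hqu, hmoves⟩

end SwapTracking

open SwapTracking in
theorem stmt_2_general (n : ℕ) (hn : 4 ≤ n) (u : List (Equiv.Perm (Fin n)))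
    (htr : IsTranspositional u) (hnd : u.Nodup)
    (x y : Fin n) (hxy : x ≠ y)
    (hmem : Equiv.swap x y ∈ u)
    (hdx : u.countP (fun t => decide (x ∈ t.support)) = 2)
    (hdy : u.countP (fun t => decide (y ∈ t.support)) = 2) :
    ¬ PermComplete u := by
  obtain ⟨a, hax, hay, hau, hxmoves⟩ :=
    exists_swap_of_countP_mem_support_eq_two htr hnd hxy hmem hdx
  obtain ⟨b, hby, hbx, hbu, hymoves⟩ :=
    exists_swap_of_countP_mem_support_eq_two htr hnd hxy.symm (swap_comm x y ▸ hmem) hdy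
  have hnotfix : ∀ g ∈ ProdSet u, g x ≠ x ∨ g y ≠ y := by
    rintro _ ⟨r, hru, rfl⟩
    refine prod_apply_ne_or_prod_apply_ne hxy hax hay hbx hby (hru.nodup_iff.mpr hnd)
      (hru.mem_iff.mpr hmem) (hru.mem_iff.mpr hau) (hru.mem_iff.mpr hbu) fun g hg h0 h1 h2 => ?_
    have hgu := hru.mem_iff.mp hg
    rw [swap_comm y x] at hymoves
    exact ⟨not_not.mp fun hgx => (hxmoves g hgu hgx).elim h0 h1,
      not_not.mp fun hgy => (hymoves g hgu hgy).elim h0 h2⟩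
  have hcard : 1 < ({x, y}ᶜ : Finset (Fin n)).card := by
    rw [Finset.card_compl, Fintype.card_fin, Finset.card_pair hxy]; omega
  obtain ⟨c, hc, d, hd, hcd⟩ := Finset.one_lt_card.mp hcard
  simp only [Finset.mem_compl, Finset.mem_insert, Finset.mem_singleton, not_or] at hc hd
  rintro (heven | hodd)
  · simpa using hnotfix 1 (heven ▸ Perm.sign_one)
  · have hcdx := swap_apply_of_ne_of_ne (Ne.symm hc.1) (Ne.symm hd.1)
    have hcdy := swap_apply_of_ne_of_ne (Ne.symm hc.2) (Ne.symm hd.2)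
    exact (hnotfix (swap c d) (hodd ▸ Perm.sign_swap hcd)).elim (· hcdx) (· hcdy)

theorem stmt_2 (n : ℕ) (hn : 4 ≤ n) (u : List (Equiv.Perm (Fin n)))
    (htr : IsTranspositional u) (hnd : u.Nodup)
    (hcov : ∀ v : Fin n, ∃ g ∈ u, v ∈ g.support)
    (hconn : (TranspGraph u).Connected)
    (x y : Fin n) (hxy : x ≠ y)
    (hmem : Equiv.swap x y ∈ u)
    (hdx : u.countP (fun t => decide (x ∈ t.support)) = 2)
    (hdy : u.countP (fun t => decide (y ∈ t.support)) = 2) :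
    ¬ PermComplete u :=
  stmt_2_general n hn u htr hnd x y hxy hmem hdx hdy
end

section
/- Let u be an injective transpositional sequence on Fin n whose graph G(u) is connected and covers every vertex of Fin n. Let Fin n be partitioned into disjoint nonempty sets V0 and V1, let C be the set of terms (x y) of u with one of x,y in V0 and the other in V1, and suppose: the subgraph of G(u) induced on V0 is acyclic (a forest), 2·|C| < |V0|, and |V1| ≥ 2. Then u is not permutationally complete. -/
/-!
Follow each point of `V0` as the factors of a product act on it one at a time. A point can only
leave `V0` through a transposition joining `V0` to `V1`, and each such factor carries out at most
one point, so as `|C| < |V0|` some point `v` stays in `V0` throughout. Its moves use distinct edges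
of the forest `G(u)[V0]`; were `v` fixed by the product they would form a closed trail in a forest,
hence there would be none, yet `v` is moved by some term of `u`. So every element of `Prod(u)` moves
a point of `V0`: `Prod(u)` contains neither the identity nor the transposition of two points of
`V1`, one of which has each parity.
-/

open Equiv Finset

namespace SimpleGraph.Walk

variable {V : Type*} {G : SimpleGraph V}

theorem IsTrail.nil_of_isAcyclic_induce {A : Set V} (hA : (G.induce A).IsAcyclic) {u v : V}
    {w : G.Walk u v} (hw : w.IsTrail) (huv : u = v) (hsupp : ∀ x ∈ w.support, x ∈ A) :
    w.Nil := by
  subst huv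
  have htrail : (w.induce A hsupp).IsTrail := by
    rwa [← isTrail_map_iff_of_injective (f := (Embedding.induce A).toHom) Subtype.val_injective,
      map_induce]
  have hnil : ((w.induce A hsupp).map (Embedding.induce A).toHom).Nil :=
    (nil_map_iff (f := (Embedding.induce A).toHom)).mpr
      (isPath_iff_nil.mp ((hA.isPath_iff_isTrail _).mpr htrail))
  rwa [map_induce] at hnil

end SimpleGraph.Walk

namespace Equiv.Perm

variable {α : Type*}

/-- The successive positions of a point `v` while the factors of `r.prod` act on it one at a time,
rightmost factor first; the list runs backwards, from `r.prod v` to `v`. -/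
def trajectory : List (Perm α) → α → List α
  | [], v => [v]
  | σ :: r, v => σ (r.prod v) :: trajectory r v

theorem prod_apply_mem_trajectory (r : List (Perm α)) (v : α) : r.prod v ∈ trajectory r v := by
  cases r <;> simp [trajectory]

variable [DecidableEq α]

theorem swap_eq_swap_apply {x y p : α} (hp : swap x y p ≠ p) :
    swap x y = swap p (swap x y p) := by
  rcases (swap_apply_ne_self_iff.mp hp).2 with rfl | rfl
  · simp
  · simp [swap_comm]

theorem adj_swap_apply {G : SimpleGraph α} {x y p : α} (hxy : G.Adj x y) (hp : swap x y p ≠ p) :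
    G.Adj (swap x y p) p := by
  rcases (swap_apply_ne_self_iff.mp hp).2 with rfl | rfl
  · simpa using hxy.symm
  · simpa using hxy

/-- The edge condition is the invariant that keeps the walk a trail: its edges come from distinct
factors of `r`. -/
theorem exists_isTrail_of_trajectory {G : SimpleGraph α} {r : List (Perm α)}
    (hr : ∀ σ ∈ r, ∃ x y, G.Adj x y ∧ σ = swap x y) (hnd : r.Nodup) (v : α) :
    ∃ w : G.Walk (r.prod v) v, w.IsTrail ∧ (∀ x ∈ w.support, x ∈ trajectory r v) ∧
      (∀ x y, s(x, y) ∈ w.edges → swap x y ∈ r) ∧ (w.Nil → ∀ σ ∈ r, σ v = v) := by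
  induction r with
  | nil => exact ⟨.nil, by simp, by simp [trajectory], by simp, by simp⟩
  | cons σ r ih =>
    obtain ⟨hσr, hnd⟩ := List.nodup_cons.mp hnd
    obtain ⟨w, htrail, hsupp, hedges, hnil⟩ :=
      ih (fun τ hτ => hr τ (List.mem_cons_of_mem _ hτ)) hnd
    obtain ⟨x, y, hxy, rfl⟩ := hr σ List.mem_cons_self
    simp only [List.prod_cons, Perm.mul_apply, trajectory, List.mem_cons]
    by_cases hp : swap x y (r.prod v) = r.prod v
    · refine ⟨w.copy hp.symm rfl, by simpa using htrail, ?_, ?_, fun hw τ hτ => ?_⟩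
      · simpa using fun a ha => Or.inr (hsupp a ha)
      · simpa using fun a b h => Or.inr (hedges a b h)
      · rw [SimpleGraph.Walk.nil_copy] at hw
        rcases hτ with rfl | hτ
        · rwa [← hw.eq]
        · exact hnil hw τ hτ
    · have hσ := swap_eq_swap_apply hp
      refine ⟨.cons (adj_swap_apply hxy hp) w, ?_, ?_, fun a b h => ?_,
        fun h => absurd h SimpleGraph.Walk.not_nil_cons⟩
      · rw [SimpleGraph.Walk.isTrail_cons]
        refine ⟨htrail, fun h => hσr ?_⟩
        rw [hσ, swap_comm]
        exact hedges _ _ h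
      · simpa using fun a ha => Or.inr (hsupp a ha)
      · rw [SimpleGraph.Walk.edges_cons, List.mem_cons, Sym2.eq_iff] at h
        rcases h with (⟨rfl, rfl⟩ | ⟨rfl, rfl⟩) | h
        · exact Or.inl ((swap_comm _ _).trans hσ.symm)
        · exact Or.inl hσ.symm
        · exact Or.inr (hedges a b h)

variable [Fintype α]

theorem card_filter_swap_apply_notMem_le (A : Finset α) (x y : α) :
    #{p ∈ A | swap x y p ∉ A} ≤ if ∃ a ∈ A, ∃ b ∉ A, swap x y = swap a b then 1 else 0 := by
  split_ifs with hcross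
  · refine card_le_one.mpr fun p hp q hq => ?_
    simp only [mem_filter] at hp hq
    have hq_moved : swap x y q ≠ q := fun h => hq.2 (h.symm ▸ hq.1)
    rw [swap_eq_swap_apply (fun h => hp.2 (h.symm ▸ hp.1))] at hq_moved
    rcases (swap_apply_ne_self_iff.mp hq_moved).2 with rfl | rfl
    · rfl
    · exact absurd hq.1 hp.2
  · refine (card_eq_zero.mpr (filter_eq_empty_iff.mpr fun p hp hout => hcross ?_)).le
    exact ⟨p, hp, _, hout, swap_eq_swap_apply fun h => hout (h.symm ▸ hp)⟩

theorem card_filter_exists_notMem_trajectory_le (A : Finset α) {r : List (Perm α)}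
    (hr : ∀ σ ∈ r, ∃ x y, σ = swap x y) :
    #{v ∈ A | ∃ z ∈ trajectory r v, z ∉ A} ≤
      r.countP fun σ => ∃ a ∈ A, ∃ b ∉ A, σ = swap a b := by
  induction r with
  | nil => simp [trajectory]
  | cons σ r ih =>
    obtain ⟨x, y, rfl⟩ := hr σ List.mem_cons_self
    have hnew : #({v ∈ A | ∃ z ∈ trajectory (swap x y :: r) v, z ∉ A} \
        {v ∈ A | ∃ z ∈ trajectory r v, z ∉ A}) ≤ #{p ∈ A | swap x y p ∉ A} := by
      refine card_le_card_of_injOn r.prod (fun v hv => ?_) r.prod.injective.injOn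
      simp only [coe_sdiff, coe_filter, Set.mem_sdiff, Set.mem_ofPred_eq, trajectory,
        List.mem_cons] at hv
      obtain ⟨⟨hvA, z, hz, hzA⟩, hleaves⟩ := hv
      have hstays : ∀ z ∈ trajectory r v, z ∈ A := by simpa [hvA] using hleaves
      rcases hz with rfl | hz
      · simpa [hzA] using hstays _ (prod_apply_mem_trajectory r v)
      · exact absurd (hstays z hz) hzA
    rw [List.countP_cons]
    simp only [decide_eq_true_eq]
    calc _ ≤ _ := card_le_card_sdiff_add_card
      _ ≤ _ := add_le_add hnew (ih fun τ hτ => hr τ (List.mem_cons_of_mem _ hτ))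
      _ ≤ _ := by have := card_filter_swap_apply_notMem_le A x y; omega

theorem exists_mem_prod_apply_ne {G : SimpleGraph α} {A : Finset α}
    (hA : (G.induce (A : Set α)).IsAcyclic) {r : List (Perm α)}
    (hr : ∀ σ ∈ r, ∃ x y, G.Adj x y ∧ σ = swap x y) (hnd : r.Nodup)
    (hcov : ∀ v, ∃ σ ∈ r, σ v ≠ v)
    (hcard : (r.countP fun σ => ∃ a ∈ A, ∃ b ∉ A, σ = swap a b) < #A) :
    ∃ v ∈ A, r.prod v ≠ v := by
  obtain ⟨v, hvA, hstays⟩ : ∃ v ∈ A, ∀ z ∈ trajectory r v, z ∈ A := by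
    by_contra! hleave
    have := card_filter_exists_notMem_trajectory_le A fun σ hσ =>
      (hr σ hσ).imp fun x ⟨y, _, h⟩ => ⟨y, h⟩
    rw [filter_true_of_mem hleave] at this
    omega
  refine ⟨v, hvA, fun hfix => ?_⟩
  obtain ⟨w, htrail, hsupp, -, hnil⟩ := exists_isTrail_of_trajectory hr hnd v
  obtain ⟨σ, hσ, hmoves⟩ := hcov v
  exact hmoves <| hnil (htrail.nil_of_isAcyclic_induce hA hfix fun z hz => hstays z (hsupp z hz))
    σ hσ

end Equiv.Perm

open Equiv.Perm in
theorem exists_mem_apply_ne_of_mem_prodSet {n : ℕ} {u : List (Perm (Fin n))}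
    (htr : IsTranspositional u) (hnd : u.Nodup) (hcov : ∀ v : Fin n, ∃ g ∈ u, v ∈ g.support)
    {A : Finset (Fin n)} (hA : ((TranspGraph u).induce (A : Set (Fin n))).IsAcyclic)
    (hcard : (u.countP fun σ => ∃ a ∈ A, ∃ b ∉ A, σ = swap a b) < #A)
    {g : Perm (Fin n)} (hg : g ∈ ProdSet u) : ∃ v ∈ A, g v ≠ v := by
  obtain ⟨r, hru, rfl⟩ := hg
  refine exists_mem_prod_apply_ne hA (fun σ hσ => ?_) (hru.nodup_iff.mpr hnd) (fun v => ?_)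
    (by convert hru.countP_eq _ ▸ hcard)
  · obtain ⟨x, y, hxy, rfl⟩ := htr σ (hru.subset hσ)
    exact ⟨x, y, ⟨hxy, hru.subset hσ⟩, rfl⟩
  · obtain ⟨σ, hσ, hv⟩ := hcov v
    exact ⟨σ, hru.symm.subset hσ, mem_support.mp hv⟩

theorem stmt_3_general (n : ℕ) (u : List (Equiv.Perm (Fin n)))
    (htr : IsTranspositional u) (hnd : u.Nodup)
    (hcov : ∀ v : Fin n, ∃ g ∈ u, v ∈ g.support)
    (V0 V1 : Finset (Fin n))
    (hdisj : Disjoint V0 V1) (huniv : V0 ∪ V1 = Finset.univ)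
    (C : List (Equiv.Perm (Fin n)))
    (hC : C = u.filter (fun t => decide (∃ x ∈ V0, ∃ y ∈ V1, t = Equiv.swap x y)))
    (hforest : ((TranspGraph u).induce (V0 : Set (Fin n))).IsAcyclic)
    (hcard : 2 * C.length < V0.card)
    (hV1 : 2 ≤ V1.card) :
    ¬ PermComplete u := by
  have hV1_iff : ∀ b, b ∈ V1 ↔ b ∉ V0 := fun b =>
    ⟨fun hb hb0 => disjoint_left.mp hdisj hb0 hb,
      fun hb0 => (mem_union.mp (huniv ▸ mem_univ b)).resolve_left hb0⟩
  have hC_len : C.length = u.countP fun σ => ∃ a ∈ V0, ∃ b ∉ V0, σ = swap a b := by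
    simp [hC, List.countP_eq_length_filter, hV1_iff]
  have hmoves : ∀ g ∈ ProdSet u, ∃ v ∈ V0, g v ≠ v := fun _ =>
    exists_mem_apply_ne_of_mem_prodSet htr hnd hcov hforest (by omega)
  obtain ⟨a, ha, b, hb, hab⟩ := one_lt_card.mp hV1
  rintro (heven | hodd)
  · obtain ⟨v, -, hv⟩ := hmoves 1 (heven ▸ Perm.sign_one)
    exact hv rfl
  · obtain ⟨v, hv0, hv⟩ := hmoves (swap a b) (hodd ▸ Perm.sign_swap hab)
    exact hv (swap_apply_of_ne_of_ne (fun h => (hV1_iff a).mp ha (h ▸ hv0))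
      fun h => (hV1_iff b).mp hb (h ▸ hv0))

theorem stmt_3 (n : ℕ) (u : List (Equiv.Perm (Fin n)))
    (htr : IsTranspositional u) (hnd : u.Nodup)
    (hcov : ∀ v : Fin n, ∃ g ∈ u, v ∈ g.support)
    (hconn : (TranspGraph u).Connected)
    (V0 V1 : Finset (Fin n))
    (hdisj : Disjoint V0 V1) (huniv : V0 ∪ V1 = Finset.univ)
    (hV0ne : V0.Nonempty) (hV1ne : V1.Nonempty)
    (C : List (Equiv.Perm (Fin n)))
    (hC : C = u.filter (fun t => decide (∃ x ∈ V0, ∃ y ∈ V1, t = Equiv.swap x y)))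
    (hforest : ((TranspGraph u).induce (V0 : Set (Fin n))).IsAcyclic)
    (hcard : 2 * C.length < V0.card)
    (hV1 : 2 ≤ V1.card) :
    ¬ PermComplete u :=
  stmt_3_general n u htr hnd hcov V0 V1 hdisj huniv C hC hforest hcard hV1
end

section
/- Let Fin n be partitioned into disjoint sets V0 and V1 with min{|V0|,|V1|} ≥ 2. Let u be an injective transpositional sequence on Fin n whose graph G(u) covers every vertex, such that the subgraph of G(u) induced on V0 is connected, the subgraph induced on V1 is connected, and the set C of terms of u with one endpoint in V0 and the other in V1 is nonempty and satisfies |C| < min{|V0|,|V1|}. Then u is not permutationally complete. -/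
/-!
Split `Fin n` as `V0 ⊔ V0ᶜ` and count, for a permutation `g`, the points of `V0` that `g` sends
out of `V0`. This crossing count is subadditive under composition, vanishes on transpositions
inside one side and is at most one on a crossing transposition, so every rearranged product of
`u` crosses at most `|C|` times. But as soon as `|C| < min |V0| |V1|`, pairing `|C| + 1` points of
`V0` with points of `V1` (and correcting the parity by a transposition inside `V1`) gives a
permutation of either sign crossing `|C| + 1` times, so `Prod(u)` misses a whole parity class.
-/

open Equiv Finset

section CrossCount

variable {α : Type*} [DecidableEq α] (s : Finset α)

def crossCount (g : Perm α) : ℕ := #{x ∈ s | g x ∉ s}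

lemma crossCount_one : crossCount s 1 = 0 :=
  card_eq_zero.2 <| filter_eq_empty_iff.2 fun _ hx hout => hout hx

lemma crossCount_mul_le (f g : Perm α) :
    crossCount s (f * g) ≤ crossCount s f + crossCount s g := by
  unfold crossCount
  calc #{x ∈ s | (f * g) x ∉ s}
      ≤ #({x ∈ s | f x ∉ s}.map g.symm.toEmbedding ∪ {x ∈ s | g x ∉ s}) := by
        refine card_le_card fun x => ?_
        simp only [mem_filter, mem_union, mem_map_equiv, symm_symm]
        rw [Perm.mul_apply]
        by_cases hgx : g x ∈ s <;> tauto
    _ ≤ _ := (card_union_le _ _).trans_eq (by rw [card_map])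

lemma crossCount_swap_le [Fintype α] (x y : α) :
    crossCount s (swap x y) ≤ if ∃ a ∈ s, ∃ b ∈ sᶜ, swap x y = swap a b then 1 else 0 := by
  split_ifs with hcross
  · obtain ⟨a, ha, b, hb, hab⟩ := hcross
    rw [hab, crossCount]
    refine (card_le_card fun z hz => mem_singleton.2 ?_).trans_eq (card_singleton a)
    rw [mem_filter] at hz
    by_contra hza
    have hzb : z ≠ b := by rintro rfl; exact mem_compl.1 hb hz.1
    rw [swap_apply_of_ne_of_ne hza hzb] at hz
    exact hz.2 hz.1
  · refine (card_eq_zero.2 <| filter_eq_empty_iff.2 fun z hz hout => hcross ?_).le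
    have hmoved : swap x y z ≠ z := fun h => hout (by rwa [h])
    obtain ⟨-, rfl | rfl⟩ := swap_apply_ne_self_iff.1 hmoved
    · rw [swap_apply_left] at hout
      exact ⟨z, hz, y, mem_compl.2 hout, rfl⟩
    · rw [swap_apply_right] at hout
      exact ⟨z, hz, x, mem_compl.2 hout, swap_comm _ _⟩

lemma crossCount_list_prod_le_countP (p : Perm α → Bool) :
    ∀ r : List (Perm α), (∀ t ∈ r, crossCount s t ≤ if p t then 1 else 0) →
      crossCount s r.prod ≤ r.countP p
  | [], _ => by simp [crossCount_one]
  | t :: r, hr => by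
    rw [List.prod_cons, List.countP_cons, add_comm (r.countP p)]
    exact (crossCount_mul_le s t r.prod).trans <| add_le_add (hr t List.mem_cons_self)
      (crossCount_list_prod_le_countP p r fun t ht => hr t (List.mem_cons_of_mem _ ht))

lemma crossCount_swap_mul_of_notMem {x y : α} (hx : x ∉ s) (hy : y ∉ s) (g : Perm α) :
    crossCount s (swap x y * g) = crossCount s g := by
  have hswap : ∀ w, swap x y w ∈ s ↔ w ∈ s := fun w => by
    by_cases hwx : w = x
    · subst hwx; simp [hx, hy]
    by_cases hwy : w = y
    · subst hwy; simp [hx, hy]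
    rw [swap_apply_of_ne_of_ne hwx hwy]
  simp only [crossCount, Perm.mul_apply, hswap]

lemma exists_le_crossCount [Fintype α] {k : ℕ} (hk : k ≤ #s) (hkc : k ≤ #sᶜ) :
    ∃ g : Perm α, k ≤ crossCount s g := by
  obtain ⟨A, hAs, hA⟩ := exists_subset_card_eq hk
  obtain ⟨B, hBs, hB⟩ := exists_subset_card_eq hkc
  let e : {x // x ∈ A} ≃ {x // x ∈ B} := Fintype.equivOfCardEq (by simp [hA, hB])
  refine ⟨e.extendSubtype, hA ▸ card_le_card fun x hx => mem_filter.2 ⟨hAs hx, ?_⟩⟩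
  exact mem_compl.1 (hBs (e.extendSubtype_mem x hx))

lemma exists_sign_eq_le_crossCount [Fintype α] {k : ℕ} (hk : k ≤ #s) (hkc : k ≤ #sᶜ)
    (hc : 1 < #sᶜ) (σ : ℤˣ) : ∃ g : Perm α, Perm.sign g = σ ∧ k ≤ crossCount s g := by
  obtain ⟨g, hg⟩ := exists_le_crossCount s hk hkc
  by_cases hsign : Perm.sign g = σ
  · exact ⟨g, hsign, hg⟩
  obtain ⟨b, hb, b', hb', hbb'⟩ := one_lt_card.1 hc
  refine ⟨swap b b' * g, ?_, ?_⟩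
  · rw [map_mul, Perm.sign_swap hbb', Int.units_ne_iff_eq_neg.1 hsign, neg_one_mul, neg_neg]
  · rwa [crossCount_swap_mul_of_notMem s (mem_compl.1 hb) (mem_compl.1 hb')]

end CrossCount

variable {n : ℕ}

lemma PermComplete.mem_prodSet {u : List (Perm (Fin n))} (hu : PermComplete u)
    {g : Perm (Fin n)} (hg : Perm.sign g = Perm.sign u.prod) : g ∈ ProdSet u := by
  have hmem : u.prod ∈ ProdSet u := ⟨u, .refl u, rfl⟩
  rcases hu with h | h <;> rw [h] at hmem ⊢ <;> exact hg.trans hmem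

lemma IsTranspositional.crossCount_le_of_mem_prodSet {u : List (Perm (Fin n))}
    (hu : IsTranspositional u) (s : Finset (Fin n)) {g : Perm (Fin n)} (hg : g ∈ ProdSet u) :
    crossCount s g ≤ u.countP fun t => decide (∃ a ∈ s, ∃ b ∈ sᶜ, t = swap a b) := by
  obtain ⟨r, hr, rfl⟩ := hg
  rw [← hr.countP_eq]
  refine crossCount_list_prod_le_countP s _ r fun t ht => ?_
  obtain ⟨x, y, -, rfl⟩ := hu t (hr.subset ht)
  simpa using crossCount_swap_le s x y

theorem stmt_4_general (n : ℕ) (u : List (Equiv.Perm (Fin n)))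
    (htr : IsTranspositional u)
    (V0 V1 : Finset (Fin n))
    (hdisj : Disjoint V0 V1) (huniv : V0 ∪ V1 = Finset.univ)
    (hV1 : 2 ≤ V1.card)
    (C : List (Equiv.Perm (Fin n)))
    (hC : C = u.filter (fun t => decide (∃ x ∈ V0, ∃ y ∈ V1, t = Equiv.swap x y)))
    (hcard : C.length < min V0.card V1.card) :
    ¬ PermComplete u := by
  intro hpc
  obtain rfl : V1 = V0ᶜ :=
    IsCompl.eq_compl ⟨hdisj.symm, codisjoint_iff.2 (by rw [sup_eq_union, union_comm, huniv]; rfl)⟩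
  obtain ⟨g, hsign, hcross⟩ := exists_sign_eq_le_crossCount V0 (k := C.length + 1)
    (by omega) (by omega) hV1 (Perm.sign u.prod)
  have hbound := htr.crossCount_le_of_mem_prodSet V0 (hpc.mem_prodSet hsign)
  rw [List.countP_eq_length_filter, ← hC] at hbound
  omega

theorem stmt_4 (n : ℕ) (u : List (Equiv.Perm (Fin n)))
    (htr : IsTranspositional u) (hnd : u.Nodup)
    (hcov : ∀ v : Fin n, ∃ g ∈ u, v ∈ g.support)
    (V0 V1 : Finset (Fin n))
    (hdisj : Disjoint V0 V1) (huniv : V0 ∪ V1 = Finset.univ)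
    (hV0 : 2 ≤ V0.card) (hV1 : 2 ≤ V1.card)
    (hconn0 : ((TranspGraph u).induce (V0 : Set (Fin n))).Connected)
    (hconn1 : ((TranspGraph u).induce (V1 : Set (Fin n))).Connected)
    (C : List (Equiv.Perm (Fin n)))
    (hC : C = u.filter (fun t => decide (∃ x ∈ V0, ∃ y ∈ V1, t = Equiv.swap x y)))
    (hCne : C ≠ [])
    (hcard : C.length < min V0.card V1.card) :
    ¬ PermComplete u :=
  stmt_4_general n u htr V0 V1 hdisj huniv hV1 C hC hcard
end

section
/- Work in the symmetric group on ℕ. Let ⟨x_1, x_2, x_3, …⟩ be an injective sequence of natural numbers all ≥ 2. Define lists of transpositions recursively by c_2 := [(1 x_2), (0 x_2)] and c_{2t+2} := c_{2t} ++ [(0 x_{2t+1}), (1 x_{2t+1}), (1 x_{2t+2}), (0 x_{2t+2})]. Then for every integer t ≥ 1, the left-to-right composition of the list r_{2t} := [(0 x_1)] ++ c_{2t} ++ [(1 x_1)] equals the permutation (0 1)(x_1 x_2 ⋯ x_{2t}), i.e., the product of the transposition swapping 0 and 1 with the 2t-cycle sending x_1 ↦ x_2 ↦ ⋯ ↦ x_{2t}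 ↦ x_1. -/
/-- The lists `c_{2t}` of transpositions of `ℕ`: `cseq x t` corresponds to `c_{2t}`,
with `c_2 = [(1 x_2), (0 x_2)]` and
`c_{2t+2} = c_{2t} ++ [(0 x_{2t+1}), (1 x_{2t+1}), (1 x_{2t+2}), (0 x_{2t+2})]`. -/
def cseq (x : ℕ → ℕ) : ℕ → List (Equiv.Perm ℕ)
  | 0 => []
  | 1 => [Equiv.swap 1 (x 2), Equiv.swap 0 (x 2)]
  | (t + 2) => cseq x (t + 1) ++
      [Equiv.swap 0 (x (2 * t + 3)), Equiv.swap 1 (x (2 * t + 3)),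
       Equiv.swap 1 (x (2 * t + 4)), Equiv.swap 0 (x (2 * t + 4))]

/-!
Write `u = x₁`. Each block `(0 a)(1 a)(1 b)(0 b)` of `c_{2t}` fixes `0` and acts as the
3-cycle `1 ↦ a ↦ b ↦ 1`; conjugating by `(1 u)` turns it into the 3-cycle `u ↦ a ↦ b ↦ u`, which
commutes with `(0 1)`. Extending the cycle `(x₁ ⋯ x_{2t})` by the two fresh points `a = x_{2t+1}`,
`b = x_{2t+2}` is multiplication by that same 3-cycle, so the identity propagates from `t` to
`t + 1`; the case `t = 1` is a direct check.
-/

open Equiv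

section Swaps

variable {α : Type*} [DecidableEq α] {p q a b u v : α}

/-- The product of the block `[(p a), (q a), (q b), (p b)]`, composed left to right. -/
def swapBlock (p q a b : α) : Perm α :=
  swap p b * swap q b * swap q a * swap p a

theorem swapBlock_eq_swap_mul_swap (h : [p, q, a, b].Nodup) :
    swapBlock p q a b = swap b q * swap a q := by
  simp only [List.nodup_cons, List.mem_cons, List.not_mem_nil] at h
  ext n
  simp only [swapBlock, Perm.mul_apply, swap_apply_def]
  split_ifs <;> grind

theorem swap_mul_swap_mul_swap_mul_swap_eq_swap_mul_swap (h : [p, q, u, v].Nodup) :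
    swap q u * (swap p v * swap q v) * swap p u = swap p q * swap u v := by
  simp only [List.nodup_cons, List.mem_cons, List.not_mem_nil] at h
  ext n
  simp only [Perm.mul_apply, swap_apply_def]
  split_ifs <;> grind

theorem swap_mul_swapBlock_mul_mul_swap {Q F : Perm α} (h : [p, q, a, b, u].Nodup)
    (hQ : swap q u * Q * swap p u = swap p q * F) :
    swap q u * (swapBlock p q a b * Q) * swap p u = swap p q * (swap b u * swap a u * F) := by
  have hconj : swap q u * (swap b q * swap a q) * swap q u = swap b u * swap a u := by
    simp only [List.nodup_cons, List.mem_cons, List.not_mem_nil] at h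
    calc swap q u * (swap b q * swap a q) * swap q u
        = (swap q u * swap b q * swap q u) * (swap q u * swap a q * swap q u) := by
          simp only [mul_assoc, swap_mul_self_mul]
      _ = swap b u * swap a u := by
          rw [swap_mul_swap_mul_swap (by grind) (by grind),
            swap_mul_swap_mul_swap (by grind) (by grind), swap_comm u b, swap_comm u a]
  have hcomm : Commute (swap p q) (swap b u * swap a u) :=
    (Perm.Disjoint.commute (Perm.disjoint_swap_swap (h.sublist (by simp)))).mul_right
      (Perm.Disjoint.commute (Perm.disjoint_swap_swap (h.sublist (by simp))))
  calc swap q u * (swapBlock p q a b * Q) * swap p u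
      = swap q u * (swap b q * swap a q) * swap q u * (swap q u * Q * swap p u) := by
        rw [swapBlock_eq_swap_mul_swap (h.sublist (by simp))]
        simp only [mul_assoc, swap_mul_self_mul]
    _ = swap p q * (swap b u * swap a u * F) := by
        rw [hconj, hQ, ← mul_assoc, ← hcomm.eq, mul_assoc]

theorem formPerm_cons_append_singleton (l : List α) (ha : a ∉ u :: l) :
    (u :: l ++ [a]).formPerm = swap a u * (u :: l).formPerm := by
  induction l generalizing u with
  | nil => simp [swap_comm]
  | cons v l ih =>
    rw [List.mem_cons, not_or] at ha
    rw [List.cons_append, List.cons_append, List.formPerm_cons_cons, List.formPerm_cons_cons,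
      ← List.cons_append, ih ha.2, ← mul_assoc, ← mul_assoc, mul_swap_eq_swap_mul,
      swap_apply_of_ne_of_ne ha.1 (List.ne_of_not_mem_cons ha.2), swap_apply_right]

theorem formPerm_cons_append_pair (l : List α) (ha : a ∉ u :: l) (hb : b ∉ u :: l)
    (hab : a ≠ b) : (u :: l ++ [a, b]).formPerm = swap b u * swap a u * (u :: l).formPerm := by
  have hb' : b ∉ u :: (l ++ [a]) := by simp_all [eq_comm]
  rw [show u :: l ++ [a, b] = u :: (l ++ [a]) ++ [b] by simp, formPerm_cons_append_singleton _ hb',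
    ← List.cons_append, formPerm_cons_append_singleton _ ha, mul_assoc]

end Swaps

theorem prod_reverse_cseq_add_two (x : ℕ → ℕ) (t : ℕ) :
    (cseq x (t + 2)).reverse.prod =
      swapBlock 0 1 (x (2 * t + 3)) (x (2 * t + 4)) * (cseq x (t + 1)).reverse.prod := by
  simp [cseq, swapBlock, mul_assoc]

theorem swap_mul_prod_reverse_cseq_mul_swap (x : ℕ → ℕ) (hx : ∀ i, 2 ≤ x (i + 1))
    (hinj : Function.Injective fun i => x (i + 1)) (t : ℕ) :
    swap 1 (x 1) * (cseq x (t + 1)).reverse.prod * swap 0 (x 1) =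
      swap 0 1 * ((List.range (2 * (t + 1))).map fun i => x (i + 1)).formPerm := by
  have hnodup : ∀ l : List ℕ, l.Nodup → (0 :: 1 :: l.map fun i => x (i + 1)).Nodup := by
    intro l hl
    simp only [List.nodup_cons, List.mem_cons, List.mem_map]
    refine ⟨?_, ?_, hl.map hinj⟩ <;> rintro (h | ⟨i, -, hi⟩) <;> grind
  induction t with
  | zero =>
    have := swap_mul_swap_mul_swap_mul_swap_eq_swap_mul_swap (p := 0) (q := 1) (u := x 1)
      (v := x 2) (by simpa using hnodup [0, 1] (by simp))
    simpa [cseq, List.range_succ, mul_assoc] using this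
  | succ t ih =>
    obtain ⟨l, hl⟩ : ∃ l, (List.range (2 * (t + 1))).map (fun i => x (i + 1)) = x 1 :: l :=
      ⟨_, by rw [show 2 * (t + 1) = 2 * t + 1 + 1 by ring, List.range_succ_eq_map, List.map_cons]⟩
    have hrange : (List.range (2 * (t + 2))).map (fun i => x (i + 1)) =
          (List.range (2 * (t + 1))).map (fun i => x (i + 1)) ++
            [x (2 * t + 3), x (2 * t + 4)] := by
      rw [show 2 * (t + 2) = 2 * (t + 1) + 1 + 1 by ring, List.range_succ, List.range_succ]
      simp only [List.map_append, List.map_cons, List.map_nil, List.append_assoc, List.cons_append,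
        List.nil_append]
      rfl
    have hfresh : ∀ j, 2 * t + 2 ≤ j → x (j + 1) ∉ x 1 :: l := by
      intro j hj h
      rw [← hl, List.mem_map] at h
      obtain ⟨i, hi, hxi⟩ := h
      have := hinj hxi
      simp only [List.mem_range] at hi
      omega
    rw [prod_reverse_cseq_add_two, hrange, hl, formPerm_cons_append_pair l (hfresh _ le_rfl)
      (hfresh _ (by omega)) (fun h => by have := hinj h; omega)]
    rw [hl] at ih
    exact swap_mul_swapBlock_mul_mul_swap
      (by simpa using hnodup [2 * t + 2, 2 * t + 3, 0] (by simp)) ih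

theorem stmt_6 (x : ℕ → ℕ)
    (hx : ∀ i, 1 ≤ i → 2 ≤ x i)
    (hinj : ∀ i j, 1 ≤ i → 1 ≤ j → x i = x j → i = j)
    (t : ℕ) (ht : 1 ≤ t) :
    (([Equiv.swap 0 (x 1)] ++ cseq x t ++ [Equiv.swap 1 (x 1)]).reverse).prod =
      Equiv.swap 0 1 * List.formPerm ((List.range (2 * t)).map (fun i => x (i + 1))) := by
  obtain ⟨s, rfl⟩ := Nat.exists_eq_add_of_le' ht
  have hx' : ∀ i, 2 ≤ x (i + 1) := fun i => hx (i + 1) (by omega)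
  have hinj' : Function.Injective fun i => x (i + 1) := fun i j h => by
    have := hinj (i + 1) (j + 1) (by omega) (by omega) h
    omega
  simpa [mul_assoc] using swap_mul_prod_reverse_cseq_mul_swap x hx' hinj' s
end

section
/- Let n ≥ 2 and let u be a transpositional sequence on Fin n (terms may repeat) such that: the graph G(u) is a tree on the whole vertex set Fin n (connected and acyclic, with every vertex on some edge); every transposition that occurs in u occurs an odd number of times; and no vertex lies in the supports of two distinct transpositions each occurring at least twice in u. Then every element of Prod(u) is an n-cycle, i.e., a single cycle whose support is all of Fin n. -/
/-
Induction on the length of the list. If no transposition repeats, the terms are the `n - 1`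
edges of a spanning tree. Left-multiplying a permutation by `(a b)` merges the cycles of `a` and
`b` when they are different, and in a forest the endpoints of an edge lie in different components
of the remaining edges, hence in different cycles of their product; so in any order the cycles of
the product are the components of the tree, i.e. there is a single `n`-cycle.

If `t = (a b)` occurs twice, write the list as `p t s t q`. Since `t s t = s^t`, it has the same
product as the shorter list `p s^t q`. Conjugation by `t` fixes every transposition disjoint from
`t`, and the transpositions other than `t` meeting `{a, b}` occur only once (they meet the
repeated `t`), so conjugation merely slides some edges `(a x)` to `(b x)` along the edge `ab`.
Acyclicity forbids `(a x)` and `(b x)` from both occurring, so the new graph is connected with at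
most `n - 1` edges, hence again a spanning tree; multiplicities stay odd and repeated
transpositions stay disjoint.
-/

open Equiv Equiv.Perm

theorem Equivalence.rel_swap_apply {α : Type*} [DecidableEq α] {r : α → α → Prop}
    (hr : Equivalence r) {a b : α} (hab : r a b) (v : α) : r v (swap a b v) := by
  rw [swap_apply_def]
  split_ifs with hva hvb
  · subst hva; exact hab
  · subst hvb; exact hr.symm hab
  · exact hr.refl v

theorem SimpleGraph.Reachable.rel_of_forall_adj {V : Type*} {G : SimpleGraph V}
    {r : V → V → Prop} (hr : Equivalence r) (h : ∀ x y, G.Adj x y → r x y) {x y : V}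
    (hxy : G.Reachable x y) : r x y := by
  obtain ⟨w⟩ := hxy
  induction w with
  | nil => exact hr.refl _
  | cons hadj _ ih => exact hr.trans (h _ _ hadj) ih

theorem Equiv.sym2_eq_of_swap_eq {α : Type*} [DecidableEq α] {x y x' y' : α} (hxy : x ≠ y)
    (h : swap x y = swap x' y') : s(x, y) = s(x', y') := by
  have hx'y' : x' ≠ y' := by
    rintro rfl
    rw [swap_self] at h
    exact hxy (by simpa using (congrArg (· x) h).symm)
  have hmoved : ∀ {a b : α}, a ≠ b → {z | swap a b z ≠ z} = {a, b} := fun hab => by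
    ext z
    simp [swap_apply_ne_self_iff, hab]
  have hsupp := congrArg (fun g : Perm α => {z | g z ≠ z}) h
  simp only [hmoved hxy, hmoved hx'y'] at hsupp
  exact Sym2.eq_iff.mpr (Set.pair_eq_pair_iff.mp hsupp)

theorem MulAut.conj_swap {α : Type*} [DecidableEq α] (σ : Perm α) (x y : α) :
    MulAut.conj σ (swap x y) = swap (σ x) (σ y) := by
  rw [MulAut.conj_apply, swap_apply_apply]

theorem MulAut.conj_conj_of_mul_self_eq_one {G : Type*} [Group G] {t : G} (ht : t * t = 1)
    (g : G) : MulAut.conj t (MulAut.conj t g) = g := by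
  rw [← MulAut.mul_apply, ← map_mul, ht, map_one, MulAut.one_apply]

theorem List.prod_append_cons_append_cons_eq_prod_map_conj {G : Type*} [Group G] {t : G}
    (ht : t * t = 1) (p s q : List G) :
    (p ++ t :: (s ++ t :: q)).prod = (p ++ s.map (MulAut.conj t) ++ q).prod := by
  have ht' : t⁻¹ = t := inv_eq_of_mul_eq_one_right ht
  simp only [List.prod_append, List.prod_cons, ← map_list_prod, MulAut.conj_apply, ht',
    mul_assoc]

theorem List.count_map_conj_of_mul_self_eq_one {G : Type*} [Group G] [DecidableEq G] {t : G}
    (ht : t * t = 1) (s : List G) (h : G) :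
    (s.map (MulAut.conj t)).count h = s.count (MulAut.conj t h) := by
  conv_lhs => rw [← MulAut.conj_conj_of_mul_self_eq_one ht h]
  exact List.count_map_of_injective _ _ (MulAut.conj t).injective _

theorem List.count_append_cons_append_cons_of_conj_eq {G : Type*} [Group G] [DecidableEq G]
    {t h : G} (ht : t * t = 1) (hch : MulAut.conj t h = h) (p s q : List G) :
    (p ++ t :: (s ++ t :: q)).count h =
      (p ++ s.map (MulAut.conj t) ++ q).count h + if h = t then 2 else 0 := by
  simp only [List.count_append, List.count_cons, List.count_map_conj_of_mul_self_eq_one ht, hch,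
    beq_iff_eq, eq_comm (a := t)]
  split_ifs <;> omega

theorem List.exists_eq_append_cons_append_cons_of_two_le_count {α : Type*} [DecidableEq α]
    {l : List α} {a : α} (h : 2 ≤ l.count a) : ∃ p s q, l = p ++ a :: (s ++ a :: q) := by
  induction l with
  | nil => simp at h
  | cons b l ih =>
    by_cases hb : b = a
    · subst hb
      rw [List.count_cons_self] at h
      have hb : b ∈ l := List.count_pos_iff.mp (by omega)
      obtain ⟨s, q, rfl⟩ := List.append_of_mem hb
      exact ⟨[], s, q, rfl⟩
    · obtain ⟨p, s, q, rfl⟩ := ih (by rwa [List.count_cons_of_ne hb] at h)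
      exact ⟨b :: p, s, q, rfl⟩

namespace Equiv.Perm

variable {α : Type*}

theorem SameCycle.rel_of_forall_rel_apply {f : Perm α} {r : α → α → Prop}
    (hr : Equivalence r) (hf : ∀ x, r x (f x)) {x y : α} (h : f.SameCycle x y) : r x y := by
  obtain ⟨i, rfl⟩ := h
  induction i using Int.induction_on with
  | zero => exact hr.refl x
  | succ i ih =>
    rw [add_comm, zpow_add, zpow_one, mul_apply]
    exact hr.trans ih (hf _)
  | pred i ih =>
    rw [sub_eq_neg_add, zpow_add, zpow_neg_one, mul_apply]
    exact hr.trans ih (hr.symm (by simpa using hf (f⁻¹ ((f ^ (-(i : ℤ))) x))))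

variable [DecidableEq α]

theorem sameCycle_swap_mul_of_not_sameCycle [Finite α] {g : Perm α} {a b : α}
    (h : ¬ g.SameCycle a b) : (swap a b * g).SameCycle a b := by
  set f := swap a b * g
  -- `f` follows the `g`-orbit of `b` until that orbit returns to `b`, where `f` jumps to `a`
  by_contra hf
  have step : ∀ w, g.SameCycle b w → f.SameCycle b w → f w = g w ∧ g w ≠ b := by
    intro w hgw hfw
    have hga : g w ≠ a := fun hw => h (hw ▸ (sameCycle_apply_right.mpr hgw).symm)
    have hgb : g w ≠ b := by
      intro hw
      have hfa : f w = a := by simp [f, hw]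
      exact hf (hfa ▸ sameCycle_apply_right.mpr hfw).symm
    exact ⟨by simp [f, swap_apply_of_ne_of_ne hga hgb], hgb⟩
  have orbit : ∀ j : ℕ, f.SameCycle b ((g ^ j) b) := by
    intro j
    induction j with
    | zero => exact SameCycle.rfl
    | succ j ih =>
      rw [pow_succ', mul_apply, ← (step _ ⟨j, by simp⟩ ih).1]
      exact sameCycle_apply_right.mpr ih
  obtain ⟨j, -, hj⟩ := (sameCycle_symm_apply_right.mpr (SameCycle.refl g b)).exists_pow_eq'
  exact (step _ ⟨j, by simp⟩ (orbit j)).2 (by simp [hj])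

theorem SameCycle.swap_mul_of_not_sameCycle [Finite α] {g : Perm α} {a b x y : α}
    (hxy : g.SameCycle x y) (hab : ¬ g.SameCycle a b) : (swap a b * g).SameCycle x y := by
  set f := swap a b * g
  have hg : g = swap a b * f := by simp [f, ← mul_assoc]
  refine hxy.rel_of_forall_rel_apply (SameCycle.equivalence f) fun w => ?_
  rw [hg, mul_apply]
  exact (sameCycle_apply_right.mpr SameCycle.rfl).trans
    ((SameCycle.equivalence f).rel_swap_apply (sameCycle_swap_mul_of_not_sameCycle hab) _)

theorem isCycle_and_support_eq_univ_of_forall_sameCycle [Fintype α] [Nontrivial α]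
    {f : Perm α} (h : ∀ x y, f.SameCycle x y) : f.IsCycle ∧ f.support = Finset.univ := by
  have hmoved : ∀ x, f x ≠ x := fun x hx => by
    obtain ⟨y, hy⟩ := exists_ne x
    exact hy ((h x y).eq_of_left hx).symm
  obtain ⟨x, -⟩ := exists_pair_ne α
  exact ⟨⟨x, hmoved x, fun y _ => h x y⟩, by ext; simp [hmoved]⟩

end Equiv.Perm

variable {n : ℕ}

theorem IsTranspositional.mono {l l' : List (Perm (Fin n))} (h : ∀ g ∈ l', g ∈ l)
    (hl : IsTranspositional l) : IsTranspositional l' :=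
  fun g hg => hl g (h g hg)

theorem IsTranspositional.slide {p s q : List (Perm (Fin n))} {t : Perm (Fin n)}
    (hl : IsTranspositional (p ++ t :: (s ++ t :: q))) :
    IsTranspositional (p ++ s.map (MulAut.conj t) ++ q) := by
  intro g hg
  simp only [List.mem_append, List.mem_map] at hg
  rcases hg with (hg | ⟨g, hg, rfl⟩) | hg
  · exact hl g (by simp [hg])
  · obtain ⟨x, y, hxy, rfl⟩ := hl g (by simp [hg])
    exact ⟨t x, t y, t.injective.ne hxy, MulAut.conj_swap t x y⟩
  · exact hl g (by simp [hg])

namespace TranspGraph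

variable {l l' : List (Perm (Fin n))}

theorem mono (h : ∀ g ∈ l', g ∈ l) : TranspGraph l' ≤ TranspGraph l :=
  fun _ _ hxy => ⟨hxy.1, h _ hxy.2⟩

theorem reachable_of_swap_mem {x y : Fin n} (h : swap x y ∈ l) :
    (TranspGraph l).Reachable x y := by
  by_cases hxy : x = y
  · subst hxy; rfl
  · exact SimpleGraph.Adj.reachable ⟨hxy, h⟩

theorem reachable_apply_of_mem (hl : IsTranspositional l) {g : Perm (Fin n)} (hg : g ∈ l)
    (w : Fin n) : (TranspGraph l).Reachable w (g w) := by
  obtain ⟨a, b, -, rfl⟩ := hl g hg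
  exact SimpleGraph.reachable_is_equivalence _ |>.rel_swap_apply (reachable_of_swap_mem hg) w

theorem reachable_prod_apply (hl : IsTranspositional l) (w : Fin n) :
    (TranspGraph l).Reachable w (l.prod w) := by
  induction l with
  | nil => rfl
  | cons g l ih =>
    have hsub : ∀ h ∈ l, h ∈ g :: l := fun _ => List.mem_cons_of_mem g
    rw [List.prod_cons, mul_apply]
    exact ((ih (hl.mono hsub)).mono (mono hsub)).trans
      (reachable_apply_of_mem hl List.mem_cons_self _)

theorem reachable_of_sameCycle_prod (hl : IsTranspositional l) {x y : Fin n}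
    (h : l.prod.SameCycle x y) : (TranspGraph l).Reachable x y :=
  h.rel_of_forall_rel_apply (SimpleGraph.reachable_is_equivalence _) (reachable_prod_apply hl)

theorem not_reachable_of_isAcyclic (hac : (TranspGraph l).IsAcyclic) {x y : Fin n}
    (hxy : x ≠ y) (hmem : swap x y ∈ l) (hsub : ∀ g ∈ l', g ∈ l)
    (hnot : swap x y ∉ l') :
    ¬ (TranspGraph l').Reachable x y := by
  refine fun hr => SimpleGraph.isAcyclic_iff_forall_adj_isBridge.mp hac ⟨hxy, hmem⟩
    (hr.mono fun v w hvw => ?_)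
  rw [SimpleGraph.deleteEdges_adj]
  refine ⟨mono hsub hvw, fun he => hnot ?_⟩
  rcases Sym2.eq_iff.mp (Set.mem_singleton_iff.mp he) with ⟨rfl, rfl⟩ | ⟨rfl, rfl⟩
  · exact hvw.2
  · rw [swap_comm]; exact hvw.2

theorem sameCycle_prod_of_adj (hl : IsTranspositional l) (hnd : l.Nodup)
    (hac : (TranspGraph l).IsAcyclic) {x y : Fin n} (hxy : (TranspGraph l).Adj x y) :
    l.prod.SameCycle x y := by
  induction l with
  | nil => exact absurd hxy.2 List.not_mem_nil
  | cons g l ih =>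
    obtain ⟨a, b, hab, rfl⟩ := hl g List.mem_cons_self
    have hsub : ∀ h ∈ l, h ∈ swap a b :: l := fun _ => List.mem_cons_of_mem _
    rw [List.nodup_cons] at hnd
    have hnc : ¬ l.prod.SameCycle a b := fun h => not_reachable_of_isAcyclic hac hab
      List.mem_cons_self hsub hnd.1 (reachable_of_sameCycle_prod (hl.mono hsub) h)
    rw [List.prod_cons]
    rcases List.mem_cons.mp hxy.2 with he | he
    · have := (SameCycle.equivalence _).rel_swap_apply (sameCycle_swap_mul_of_not_sameCycle hnc) x
      rwa [← he, swap_apply_left, he] at this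
    · have hxy' := ih (hl.mono hsub) hnd.2 (hac.anti (mono hsub)) ⟨hxy.1, he⟩
      exact hxy'.swap_mul_of_not_sameCycle hnc

theorem sameCycle_prod_of_isTree (hl : IsTranspositional l) (hnd : l.Nodup)
    (htree : (TranspGraph l).IsTree) (x y : Fin n) : l.prod.SameCycle x y :=
  (htree.connected.preconnected x y).rel_of_forall_adj (SameCycle.equivalence _)
    fun _ _ hadj => sameCycle_prod_of_adj hl hnd htree.isAcyclic hadj

theorem card_edgeSet (hl : IsTranspositional l) :
    Nat.card (TranspGraph l).edgeSet = l.toFinset.card := by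
  let φ : Sym2 (Fin n) → Perm (Fin n) := Sym2.lift ⟨fun x y => swap x y, swap_comm⟩
  have himage : φ '' (TranspGraph l).edgeSet = l.toFinset := by
    ext g
    constructor
    · rintro ⟨e, he, rfl⟩
      induction e using Sym2.ind
      simpa [φ] using he.2
    · intro hg
      obtain ⟨x, y, hxy, rfl⟩ := hl g (List.mem_toFinset.mp hg)
      exact ⟨s(x, y), ⟨hxy, List.mem_toFinset.mp hg⟩, rfl⟩
  have hinj : Set.InjOn φ (TranspGraph l).edgeSet := by
    intro e he e' _ h
    induction e using Sym2.ind
    induction e' using Sym2.ind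
    exact sym2_eq_of_swap_eq he.1 h
  rw [Nat.card_coe_set_eq, ← hinj.ncard_image, himage, Set.ncard_coe_finset]

theorem isTree_iff_connected_and_card (hl : IsTranspositional l) :
    (TranspGraph l).IsTree ↔ (TranspGraph l).Connected ∧ l.toFinset.card + 1 = n := by
  simp [SimpleGraph.isTree_iff_connected_and_card, card_edgeSet hl]

theorem isTree_of_connected_of_card_le (hl : IsTranspositional l)
    (hconn : (TranspGraph l).Connected) (hcard : l.toFinset.card + 1 ≤ n) :
    (TranspGraph l).IsTree := by
  refine (isTree_iff_connected_and_card hl).mpr ⟨hconn, le_antisymm hcard ?_⟩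
  simpa [card_edgeSet hl] using hconn.card_vert_le_card_edgeSet_add_one

theorem conj_eq_self_of_conj_mem (hl : IsTranspositional l)
    (hac : (TranspGraph l).IsAcyclic) {t h : Perm (Fin n)} (ht : t ∈ l) (hh : h ∈ l)
    (hch : MulAut.conj t h ∈ l) : MulAut.conj t h = h := by
  by_contra hne
  obtain ⟨x, y, hxy, rfl⟩ := hl h hh
  have hth : t ≠ swap x y := by
    rintro rfl
    exact hne (by rw [MulAut.conj_apply, mul_inv_cancel_right])
  set l' := l.filter (· ≠ swap x y)
  have hsub : ∀ g ∈ l', g ∈ l := fun g hg => (List.mem_filter.mp hg).1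
  have hmem' : ∀ g ∈ l, g ≠ swap x y → g ∈ l' := fun g hg hne => by simp [l', hg, hne]
  have hl' : IsTranspositional l' := hl.mono hsub
  refine not_reachable_of_isAcyclic hac hxy hh hsub (by simp [l']) ?_
  have hconj : swap (t x) (t y) ∈ l' := MulAut.conj_swap t x y ▸ hmem' _ hch hne
  -- the path `x, t x, t y, y` avoids the bridge `xy`
  exact ((reachable_apply_of_mem hl' (hmem' t ht hth) x).trans
    (reachable_of_swap_mem hconj)).trans
    (reachable_apply_of_mem hl' (hmem' t ht hth) y).symm

theorem reachable_slide_of_adj {p s q : List (Perm (Fin n))} {t : Perm (Fin n)}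
    (hl : IsTranspositional (p ++ s.map (MulAut.conj t) ++ q))
    (ht : t ∈ p ++ s.map (MulAut.conj t) ++ q) {x y : Fin n}
    (hxy : (TranspGraph (p ++ t :: (s ++ t :: q))).Adj x y) :
    (TranspGraph (p ++ s.map (MulAut.conj t) ++ q)).Reachable x y := by
  have hmem := hxy.2
  simp only [List.mem_append, List.mem_cons] at hmem
  rcases hmem with hp | rfl | hs | rfl | hq
  · exact reachable_of_swap_mem (by simp [hp])
  · exact reachable_of_swap_mem ht
  · have hconj : swap (t x) (t y) ∈ p ++ s.map (MulAut.conj t) ++ q :=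
      MulAut.conj_swap t x y ▸ by simp [hs]
    exact ((reachable_apply_of_mem hl ht x).trans (reachable_of_swap_mem hconj)).trans
      (reachable_apply_of_mem hl ht y).symm
  · exact reachable_of_swap_mem ht
  · exact reachable_of_swap_mem (by simp [hq])

end TranspGraph

structure OddTreeSeq (u : List (Perm (Fin n))) : Prop where
  isTranspositional : IsTranspositional u
  isTree : (TranspGraph u).IsTree
  odd_count : ∀ g ∈ u, Odd (u.count g)
  support_disjoint_of_repeated : ∀ v : Fin n, ∀ g ∈ u, ∀ g' ∈ u, g ≠ g' →
    2 ≤ u.count g → 2 ≤ u.count g' → ¬ (v ∈ g.support ∧ v ∈ g'.support)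

namespace OddTreeSeq

variable {u r p s q : List (Perm (Fin n))} {t : Perm (Fin n)}

theorem of_perm (hu : OddTreeSeq u) (h : r.Perm u) : OddTreeSeq r := by
  have hgraph : TranspGraph r = TranspGraph u :=
    le_antisymm (TranspGraph.mono fun _ => h.mem_iff.mp) (TranspGraph.mono fun _ => h.mem_iff.mpr)
  refine ⟨hu.isTranspositional.mono fun _ => h.mem_iff.mp, hgraph ▸ hu.isTree,
    fun g hg => ?_, ?_⟩
  · rw [h.count_eq]; exact hu.odd_count g (h.mem_iff.mp hg)
  · intro v g hg g' hg' hne h2 h2'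
    rw [h.count_eq] at h2 h2'
    exact hu.support_disjoint_of_repeated v g (h.mem_iff.mp hg) g' (h.mem_iff.mp hg') hne h2 h2'

theorem conj_eq_self_of_two_le_count (hu : OddTreeSeq u) {t h : Perm (Fin n)}
    (ht : 2 ≤ u.count t) (hh : 2 ≤ u.count h) : MulAut.conj t h = h := by
  rw [MulAut.conj_apply]
  by_cases hht : h = t
  · rw [hht, mul_inv_cancel_right]
  have hdisj : Disjoint h t := by
    rw [disjoint_iff_disjoint_support, Finset.disjoint_left]
    exact fun v hv hv' => hu.support_disjoint_of_repeated v h (List.count_pos_iff.mp (by omega)) t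
      (List.count_pos_iff.mp (by omega)) hht hh ht ⟨hv, hv'⟩
  exact hdisj.commute.symm.mul_inv_cancel

theorem count_slide_le_one (hu : OddTreeSeq u) (hsplit : u = p ++ t :: (s ++ t :: q))
    {h : Perm (Fin n)} (hch : MulAut.conj t h ≠ h) :
    (p ++ s.map (MulAut.conj t) ++ q).count h ≤ 1 := by
  have htu : 2 ≤ u.count t := by simp [hsplit, List.count_append]; omega
  obtain ⟨a, b, -, rfl⟩ := hu.isTranspositional t (List.count_pos_iff.mp (by omega))
  have hinv := MulAut.conj_conj_of_mul_self_eq_one (swap_mul_self a b) h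
  have h₁ : u.count h ≤ 1 := by
    by_contra hh
    exact hch (hu.conj_eq_self_of_two_le_count htu (by omega))
  have h₂ : u.count (MulAut.conj (swap a b) h) ≤ 1 := by
    by_contra hh
    have := hu.conj_eq_self_of_two_le_count htu (h := MulAut.conj (swap a b) h) (by omega)
    exact hch (by rw [← this, hinv])
  have h₃ : u.count h = 0 ∨ u.count (MulAut.conj (swap a b) h) = 0 := by
    by_contra! hpos
    exact hch (TranspGraph.conj_eq_self_of_conj_mem hu.isTranspositional hu.isTree.isAcyclic
      (List.count_pos_iff.mp (by omega)) (List.count_pos_iff.mp (by omega))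
      (List.count_pos_iff.mp (by omega)))
  subst hsplit
  simp only [List.count_append, List.count_cons,
    List.count_map_conj_of_mul_self_eq_one (swap_mul_self a b)] at h₁ h₂ h₃ ⊢
  omega

theorem card_toFinset_slide_le (hu : OddTreeSeq u) (hsplit : u = p ++ t :: (s ++ t :: q)) :
    (p ++ s.map (MulAut.conj t) ++ q).toFinset.card ≤ u.toFinset.card := by
  have htu : 2 ≤ u.count t := by simp [hsplit, List.count_append]; omega
  let φ : Perm (Fin n) → Perm (Fin n) := fun g => if g ∈ s then MulAut.conj t g else g
  have hfix : ∀ g, g ∈ p ∨ g ∈ q → φ g = g := fun g hpq => by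
    by_cases hs : g ∈ s
    · have hg : 2 ≤ u.count g := by
        have := List.count_pos_iff.mpr hs
        rcases hpq with hpq | hpq <;> have := List.count_pos_iff.mpr hpq <;>
          simp [hsplit, List.count_append, List.count_cons] <;> omega
      simp only [φ, if_pos hs, hu.conj_eq_self_of_two_le_count htu hg]
    · simp [φ, hs]
  refine le_trans (Finset.card_le_card fun g hg => ?_) (Finset.card_image_le (f := φ))
  simp only [List.mem_toFinset, List.mem_append, List.mem_map] at hg
  rw [Finset.mem_image]
  rcases hg with (hg | ⟨g, hg, rfl⟩) | hg
  · exact ⟨g, by simp [hsplit, hg], hfix g (.inl hg)⟩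
  · exact ⟨g, by simp [hsplit, hg], by simp [φ, hg]⟩
  · exact ⟨g, by simp [hsplit, hg], hfix g (.inr hg)⟩

theorem isTree_slide (hu : OddTreeSeq u) (hsplit : u = p ++ t :: (s ++ t :: q))
    (ht : t ∈ p ++ s.map (MulAut.conj t) ++ q) :
    (TranspGraph (p ++ s.map (MulAut.conj t) ++ q)).IsTree := by
  have hr := (hsplit ▸ hu.isTranspositional : IsTranspositional (p ++ t :: (s ++ t :: q))).slide
  have := hu.isTree.connected.nonempty
  have hconn : (TranspGraph (p ++ s.map (MulAut.conj t) ++ q)).Connected := ⟨fun x y =>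
    (hu.isTree.connected.preconnected x y).rel_of_forall_adj
      (SimpleGraph.reachable_is_equivalence _)
      fun _ _ hadj => TranspGraph.reachable_slide_of_adj hr ht (hsplit ▸ hadj)⟩
  refine TranspGraph.isTree_of_connected_of_card_le hr hconn ?_
  have := ((TranspGraph.isTree_iff_connected_and_card hu.isTranspositional).mp hu.isTree).2
  have := hu.card_toFinset_slide_le hsplit
  omega

theorem slide (hu : OddTreeSeq u) (hsplit : u = p ++ t :: (s ++ t :: q)) :
    OddTreeSeq (p ++ s.map (MulAut.conj t) ++ q) := by
  have htu : 2 ≤ u.count t := by simp [hsplit, List.count_append]; omega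
  obtain ⟨a, b, -, hab⟩ := hu.isTranspositional t (List.count_pos_iff.mp (by omega))
  have hcount : ∀ h, MulAut.conj t h = h →
      u.count h = (p ++ s.map (MulAut.conj t) ++ q).count h + if h = t then 2 else 0 :=
    fun h hch => hsplit ▸ List.count_append_cons_append_cons_of_conj_eq
      (hab ▸ swap_mul_self a b) hch p s q
  have htr : t ∈ p ++ s.map (MulAut.conj t) ++ q := by
    have := hcount t (by rw [MulAut.conj_apply, mul_inv_cancel_right])
    obtain ⟨k, hk⟩ := hu.odd_count t (List.count_pos_iff.mp (by omega))
    rw [if_pos rfl] at this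
    exact List.count_pos_iff.mp (by omega)
  have hle : ∀ h, MulAut.conj t h ≠ h → (p ++ s.map (MulAut.conj t) ++ q).count h ≤ 1 :=
    fun h => hu.count_slide_le_one hsplit
  refine ⟨(hsplit ▸ hu.isTranspositional : IsTranspositional (p ++ t :: (s ++ t :: q))).slide,
    hu.isTree_slide hsplit htr, ?_, ?_⟩ <;>
    generalize p ++ s.map (MulAut.conj t) ++ q = r at hcount hle
  · intro h hh
    have hpos := List.count_pos_iff.mpr hh
    by_cases hch : MulAut.conj t h = h
    · have hodd := hu.odd_count h (List.count_pos_iff.mp (by have := hcount h hch; omega))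
      rw [hcount h hch] at hodd
      split_ifs at hodd <;> simpa [parity_simps] using hodd
    · rw [show r.count h = 1 by have := hle h hch; omega]
      exact odd_one
  · have hrep : ∀ h, 2 ≤ r.count h → 2 ≤ u.count h := fun h h2 => by
      have hch : MulAut.conj t h = h := by_contra fun hch => by have := hle h hch; omega
      have := hcount h hch
      split_ifs at this <;> omega
    intro v g hg g' hg' hne h2 h2'
    have hu2 := hrep g h2
    have hu2' := hrep g' h2'
    exact hu.support_disjoint_of_repeated v g (List.count_pos_iff.mp (by omega)) g'
      (List.count_pos_iff.mp (by omega)) hne hu2 hu2'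

theorem exists_shorter (hu : OddTreeSeq u) (ht : 2 ≤ u.count t) :
    ∃ r : List (Perm (Fin n)), r.length < u.length ∧ r.prod = u.prod ∧ OddTreeSeq r := by
  obtain ⟨p, s, q, hsplit⟩ := List.exists_eq_append_cons_append_cons_of_two_le_count ht
  obtain ⟨a, b, -, rfl⟩ := hu.isTranspositional t (List.count_pos_iff.mp (by omega))
  refine ⟨_, by simp [hsplit], ?_, hu.slide hsplit⟩
  rw [hsplit, List.prod_append_cons_append_cons_eq_prod_map_conj (swap_mul_self a b)]

theorem sameCycle_prod {u : List (Perm (Fin n))} (hu : OddTreeSeq u) (x y : Fin n) :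
    u.prod.SameCycle x y := by
  by_cases hnd : u.Nodup
  · exact TranspGraph.sameCycle_prod_of_isTree hu.isTranspositional hnd hu.isTree x y
  · obtain ⟨t, ht⟩ : ∃ t, 1 < u.count t := by
      simpa [List.nodup_iff_count_le_one] using hnd
    obtain ⟨r, hlen, hprod, hr⟩ := hu.exists_shorter ht
    exact hprod ▸ hr.sameCycle_prod x y
termination_by u.length

end OddTreeSeq

theorem stmt_10_general (n : ℕ) (hn : 2 ≤ n) (u : List (Equiv.Perm (Fin n)))
    (htr : IsTranspositional u)
    (htree : (TranspGraph u).IsTree)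
    (hodd : ∀ g ∈ u, Odd (u.count g))
    (hnov : ∀ v : Fin n, ∀ g ∈ u, ∀ g' ∈ u, g ≠ g' →
      2 ≤ u.count g → 2 ≤ u.count g' → ¬ (v ∈ g.support ∧ v ∈ g'.support)) :
    ∀ f ∈ ProdSet u, f.IsCycle ∧ f.support = Finset.univ := by
  rintro f ⟨r, hr, rfl⟩
  have : Nontrivial (Fin n) := Fin.nontrivial_iff_two_le.mpr hn
  exact isCycle_and_support_eq_univ_of_forall_sameCycle
    (OddTreeSeq.of_perm ⟨htr, htree, hodd, hnov⟩ hr).sameCycle_prod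

theorem stmt_10 (n : ℕ) (hn : 2 ≤ n) (u : List (Equiv.Perm (Fin n)))
    (htr : IsTranspositional u)
    (hcov : ∀ v : Fin n, ∃ g ∈ u, v ∈ g.support)
    (htree : (TranspGraph u).IsTree)
    (hodd : ∀ g ∈ u, Odd (u.count g))
    (hnov : ∀ v : Fin n, ∀ g ∈ u, ∀ g' ∈ u, g ≠ g' →
      2 ≤ u.count g → 2 ≤ u.count g' → ¬ (v ∈ g.support ∧ v ∈ g'.support)) :
    ∀ f ∈ ProdSet u, f.IsCycle ∧ f.support = Finset.univ :=
  stmt_10_general n hn u htr htree hodd hnov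
end

section
/- Let u be a transpositional sequence on Fin 3 such that each of the points 0, 1, 2 lies in the support of some term of u. Then u is conjugacy invariant if and only if either the length of u is odd, or exactly two of the three transpositions (0 1), (1 2), (0 2) occur in u and at least one of those two occurs exactly once. -/
/-!
Every rearrangement of a transpositional `u` has product of sign `(-1) ^ u.length`, and in `S₃`
two permutations are conjugate iff they have the same sign and are both or neither the identity.
So `u` is conjugacy invariant iff `1 ∉ Prod(u)`, unless `Prod(u) = {1}`; for odd length `1` has
the wrong sign, and for even length `Prod(u)` always contains a `3`-cycle.

If only `p` and `q` occur and `p` occurs once, every product is `qⁱ p qʲ ≠ 1`. Otherwise the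
letters beyond a short word with product `1`, such as `(0 1) (0 2) (1 2) (0 2)` or
`((0 1) (1 2))³`, occur in even numbers and cancel in adjacent pairs.
-/

open Equiv List

theorem notMem_zpowers_of_mul_self {G : Type*} [Group G] {p q : G} (hq : q * q = 1)
    (hp : p ≠ 1) (hpq : p ≠ q) : p ∉ Subgroup.zpowers q := by
  rintro ⟨k, rfl⟩
  have hq2 : q ^ (2 : ℤ) = 1 := by rw [zpow_two, hq]
  rcases Int.emod_two_eq_zero_or_one k with hk | hk <;>
    simp_all [zpow_eq_zpow_emod k hq2]

theorem List.prod_ne_one_of_count_eq_one {G : Type*} [Group G] [DecidableEq G] {p q : G}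
    {l : List G} (hl : ∀ x ∈ l, x = p ∨ x = q) (hc : l.count p = 1)
    (hp : p ∉ Subgroup.zpowers q) : l.prod ≠ 1 := by
  obtain ⟨s, t, rfl⟩ := append_of_mem (count_pos_iff.mp (by omega : 0 < l.count p))
  have hst : s.count p = 0 ∧ t.count p = 0 := by simp at hc; omega
  have only_q : ∀ r : List G, r.count p = 0 → (∀ x ∈ r, x ∈ s ++ p :: t) →
      r.prod = q ^ r.length :=
    fun r hr hsub => prod_eq_pow_card r q fun x hx =>
      (hl x (hsub x hx)).resolve_left fun hxp => count_eq_zero.mp hr (hxp ▸ hx)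
  rw [prod_append, prod_cons, only_q s hst.1 (by simp +contextual),
    only_q t hst.2 (by simp +contextual)]
  intro h
  apply hp
  rw [eq_mul_inv_of_mul_eq (eq_inv_of_mul_eq_one_right h)]
  exact mul_mem (inv_mem (pow_mem (Subgroup.mem_zpowers q) _))
    (inv_mem (pow_mem (Subgroup.mem_zpowers q) _))

section ProdSet

variable {n : ℕ} {u : List (Perm (Fin n))}

theorem prod_mem_prodSet_of_perm_append {w d : List (Perm (Fin n))} (h : u ~ w ++ d)
    (hd : d.prod = 1) : w.prod ∈ ProdSet u :=
  ⟨w ++ d, h.symm, by rw [prod_append, hd, mul_one]⟩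

theorem sign_of_mem_prodSet (htr : IsTranspositional u) {g : Perm (Fin n)}
    (hg : g ∈ ProdSet u) : Perm.sign g = (-1) ^ u.length := by
  obtain ⟨r, hru, rfl⟩ := hg
  rw [Perm.sign_prod_list_swap fun x hx => htr x (hru.mem_iff.mp hx), hru.length_eq]

theorem one_notMem_prodSet {p q : Perm (Fin n)}
    (hu : ∀ x ∈ u, x = p ∨ x = q) (hc : u.count p = 1) (hp : p ∉ Subgroup.zpowers q) :
    1 ∉ ProdSet u := fun ⟨_, hr, h1⟩ =>
  prod_ne_one_of_count_eq_one (fun x hx => hu x (hr.mem_iff.mp hx)) ((hr.count_eq p).trans hc)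
    hp h1

theorem one_notMem_prodSet_of_odd (htr : IsTranspositional u)
    (hodd : Odd u.length) : 1 ∉ ProdSet u := fun h1 => by
  have := sign_of_mem_prodSet htr h1
  rw [map_one, hodd.neg_one_pow] at this
  exact absurd this (by decide)

end ProdSet

section FinThree

variable {u : List (Perm (Fin 3))}

local notation "τ₀₁" => swap (0 : Fin 3) 1
local notation "τ₁₂" => swap (1 : Fin 3) 2
local notation "τ₀₂" => swap (0 : Fin 3) 2

def sortedWord (i j k : ℕ) : List (Perm (Fin 3)) :=
  replicate i τ₀₁ ++ replicate j τ₁₂ ++ replicate k τ₀₂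

theorem eq_swap_of_mem (htr : IsTranspositional u) {g : Perm (Fin 3)}
    (hg : g ∈ u) : g = τ₀₁ ∨ g = τ₁₂ ∨ g = τ₀₂ := by
  obtain ⟨x, y, hxy, rfl⟩ := htr g hg
  clear hg
  revert x y; decide

theorem perm_sortedWord_count (htr : IsTranspositional u) :
    u ~ sortedWord (u.count τ₀₁) (u.count τ₁₂) (u.count τ₀₂) := by
  rw [perm_iff_count]
  intro g
  simp only [sortedWord, count_append, count_replicate, beq_iff_eq]
  by_cases hg : g = τ₀₁ ∨ g = τ₁₂ ∨ g = τ₀₂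
  · rcases hg with rfl | rfl | rfl <;> simp +decide
  · have : g ∉ u := fun h => hg (eq_swap_of_mem htr h)
    simp only [not_or] at hg
    obtain ⟨h₀₁, h₁₂, h₀₂⟩ := hg
    simp [count_eq_zero_of_not_mem this, Ne.symm h₀₁, Ne.symm h₁₂, Ne.symm h₀₂]

theorem sortedWord_add_perm (i j k i' j' k' : ℕ) :
    sortedWord (i + i') (j + j') (k + k') ~ sortedWord i j k ++ sortedWord i' j' k' := by
  rw [perm_iff_count]
  intro g
  simp only [sortedWord, count_append, count_replicate]
  split_ifs <;> omega

theorem prod_sortedWord_of_even {i j k : ℕ} (hi : Even i) (hj : Even j) (hk : Even k) :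
    (sortedWord i j k).prod = 1 := by
  obtain ⟨i, rfl⟩ := hi
  obtain ⟨j, rfl⟩ := hj
  obtain ⟨k, rfl⟩ := hk
  simp [sortedWord, ← two_mul, pow_mul, sq]

theorem prod_mem_prodSet_of_perm_sortedWord (htr : IsTranspositional u)
    (w : List (Perm (Fin 3))) (i j k : ℕ) (hw : w ~ sortedWord i j k)
    (h : i ≤ u.count τ₀₁ ∧ j ≤ u.count τ₁₂ ∧ k ≤ u.count τ₀₂ ∧ i % 2 = u.count τ₀₁ % 2 ∧
      j % 2 = u.count τ₁₂ % 2 ∧ k % 2 = u.count τ₀₂ % 2) :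
    w.prod ∈ ProdSet u := by
  refine prod_mem_prodSet_of_perm_append ?_ (prod_sortedWord_of_even
    (i := u.count τ₀₁ - i) (j := u.count τ₁₂ - j) (k := u.count τ₀₂ - k)
    (by rw [Nat.even_iff]; omega) (by rw [Nat.even_iff]; omega) (by rw [Nat.even_iff]; omega))
  calc u ~ sortedWord (i + (u.count τ₀₁ - i)) (j + (u.count τ₁₂ - j)) (k + (u.count τ₀₂ - k)) := by
        rw [Nat.add_sub_cancel' h.1, Nat.add_sub_cancel' h.2.1, Nat.add_sub_cancel' h.2.2.1]
        exact perm_sortedWord_count htr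
    _ ~ _ := (sortedWord_add_perm ..).trans (hw.symm.append_right _)

theorem length_eq_count_add (htr : IsTranspositional u) :
    u.length = u.count τ₀₁ + u.count τ₁₂ + u.count τ₀₂ := by
  simp [(perm_sortedWord_count htr).length_eq, sortedWord, add_assoc]

theorem count_pos_of_covers (htr : IsTranspositional u)
    (hcov : ∀ v : Fin 3, ∃ g ∈ u, v ∈ g.support) :
    (0 < u.count τ₀₁ ∨ 0 < u.count τ₀₂) ∧ (0 < u.count τ₀₁ ∨ 0 < u.count τ₁₂) ∧
      (0 < u.count τ₁₂ ∨ 0 < u.count τ₀₂) := by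
  have h : ∀ v, ∃ g, (g = τ₀₁ ∨ g = τ₁₂ ∨ g = τ₀₂) ∧ g ∈ u ∧ v ∈ g.support := fun v =>
    let ⟨g, hg, hv⟩ := hcov v
    ⟨g, eq_swap_of_mem htr hg, hg, hv⟩
  simp only [or_and_right, exists_or, exists_eq_left] at h
  have h0 := h 0
  have h1 := h 1
  have h2 := h 2
  simp +decide only [count_pos_iff] at h0 h1 h2 ⊢
  tauto

theorem isConj_of_sign_eq_fin_three {f g : Perm (Fin 3)} (hs : Perm.sign f = Perm.sign g)
    (h1 : f = 1 ↔ g = 1) : IsConj f g := by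
  rw [isConj_iff]
  revert f g
  decide

def TwoKindsOneOnce (u : List (Perm (Fin 3))) : Prop :=
  (τ₀₁ ∈ u ∧ τ₁₂ ∈ u ∧ τ₀₂ ∉ u ∧ (u.count τ₀₁ = 1 ∨ u.count τ₁₂ = 1)) ∨
    (τ₀₁ ∈ u ∧ τ₀₂ ∈ u ∧ τ₁₂ ∉ u ∧ (u.count τ₀₁ = 1 ∨ u.count τ₀₂ = 1)) ∨
    (τ₁₂ ∈ u ∧ τ₀₂ ∈ u ∧ τ₀₁ ∉ u ∧ (u.count τ₁₂ = 1 ∨ u.count τ₀₂ = 1))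

theorem exists_ne_one_mem_prodSet (htr : IsTranspositional u)
    (hcov : ∀ v : Fin 3, ∃ g ∈ u, v ∈ g.support) (heven : Even u.length) :
    ∃ g ∈ ProdSet u, g ≠ 1 := by
  have hpos := count_pos_of_covers htr hcov
  rw [length_eq_count_add htr, Nat.even_iff] at heven
  have mem := prod_mem_prodSet_of_perm_sortedWord htr
  set p := u.count τ₀₁
  set q := u.count τ₁₂
  set r := u.count τ₀₂
  by_cases hpq : p % 2 = 1 ∧ q % 2 = 1
  · exact ⟨_, mem [τ₀₁, τ₁₂] 1 1 0 (by decide) (by omega), by decide⟩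
  by_cases hpr : p % 2 = 1 ∧ r % 2 = 1
  · exact ⟨_, mem [τ₀₁, τ₀₂] 1 0 1 (by decide) (by omega), by decide⟩
  by_cases hqr : q % 2 = 1 ∧ r % 2 = 1
  · exact ⟨_, mem [τ₁₂, τ₀₂] 0 1 1 (by decide) (by omega), by decide⟩
  by_cases hpq' : 2 ≤ p ∧ 2 ≤ q
  · exact ⟨_, mem [τ₀₁, τ₁₂, τ₀₁, τ₁₂] 2 2 0 (by decide) (by omega), by decide⟩
  by_cases hpr' : 2 ≤ p ∧ 2 ≤ r
  · exact ⟨_, mem [τ₀₁, τ₀₂, τ₀₁, τ₀₂] 2 0 2 (by decide) (by omega), by decide⟩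
  · exact ⟨_, mem [τ₁₂, τ₀₂, τ₁₂, τ₀₂] 0 2 2 (by decide) (by omega), by decide⟩

theorem one_mem_prodSet_of_not_twoKindsOneOnce (htr : IsTranspositional u)
    (hcov : ∀ v : Fin 3, ∃ g ∈ u, v ∈ g.support) (heven : Even u.length)
    (h : ¬ TwoKindsOneOnce u) : 1 ∈ ProdSet u := by
  have hpos := count_pos_of_covers htr hcov
  rw [length_eq_count_add htr, Nat.even_iff] at heven
  simp only [TwoKindsOneOnce, ← count_pos_iff, not_or] at h
  have mem (w : List (Perm (Fin 3))) (i j k : ℕ) (hw : w ~ sortedWord i j k) (h1 : w.prod = 1) :=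
    h1 ▸ prod_mem_prodSet_of_perm_sortedWord htr w i j k hw
  set p := u.count τ₀₁
  set q := u.count τ₁₂
  set r := u.count τ₀₂
  rcases Nat.mod_two_eq_zero_or_one p with hp | hp <;>
    rcases Nat.mod_two_eq_zero_or_one q with hq | hq <;>
    rcases Nat.mod_two_eq_zero_or_one r with hr | hr
  · exact mem [] 0 0 0 (by decide) (by decide) (by omega)
  · omega
  · omega
  · rcases Nat.eq_zero_or_pos p with hp0 | hp0
    · exact mem [τ₁₂, τ₀₂, τ₁₂, τ₀₂, τ₁₂, τ₀₂] 0 3 3 (by decide) (by decide) (by omega)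
    · exact mem [τ₁₂, τ₀₁, τ₀₂, τ₀₁] 2 1 1 (by decide) (by decide) (by omega)
  · omega
  · rcases Nat.eq_zero_or_pos q with hq0 | hq0
    · exact mem [τ₀₁, τ₀₂, τ₀₁, τ₀₂, τ₀₁, τ₀₂] 3 0 3 (by decide) (by decide) (by omega)
    · exact mem [τ₀₁, τ₁₂, τ₀₂, τ₁₂] 1 2 1 (by decide) (by decide) (by omega)
  · rcases Nat.eq_zero_or_pos r with hr0 | hr0
    · exact mem [τ₀₁, τ₁₂, τ₀₁, τ₁₂, τ₀₁, τ₁₂] 3 3 0 (by decide) (by decide) (by omega)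
    · exact mem [τ₀₁, τ₀₂, τ₁₂, τ₀₂] 1 1 2 (by decide) (by decide) (by omega)
  · omega

theorem one_notMem_prodSet_of_twoKindsOneOnce (htr : IsTranspositional u)
    (h : TwoKindsOneOnce u) : 1 ∉ ProdSet u := by
  have key {p q s : Perm (Fin 3)} (hs : s ∉ u) (hc : u.count p = 1)
      (h : q * q = 1 ∧ p ≠ 1 ∧ p ≠ q ∧
        ∀ x : Perm (Fin 3), x = τ₀₁ ∨ x = τ₁₂ ∨ x = τ₀₂ → x = p ∨ x = q ∨ x = s) :
      1 ∉ ProdSet u := by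
    obtain ⟨hq, hp, hpq, hpqs⟩ := h
    refine one_notMem_prodSet (fun x hx => ?_) hc (notMem_zpowers_of_mul_self hq hp hpq)
    rcases hpqs x (eq_swap_of_mem htr hx) with rfl | rfl | rfl
    exacts [Or.inl rfl, Or.inr rfl, absurd hx hs]
  rcases h with ⟨-, -, hs, hc | hc⟩ | ⟨-, -, hs, hc | hc⟩ | ⟨-, -, hs, hc | hc⟩
  · exact key (q := τ₁₂) hs hc (by decide)
  · exact key (q := τ₀₁) hs hc (by decide)
  · exact key (q := τ₀₂) hs hc (by decide)
  · exact key (q := τ₀₁) hs hc (by decide)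
  · exact key (q := τ₀₂) hs hc (by decide)
  · exact key (q := τ₁₂) hs hc (by decide)

theorem conjInv_of_one_notMem_prodSet (htr : IsTranspositional u)
    (h1 : 1 ∉ ProdSet u) : ConjInv u := fun _ hf _ hg =>
  isConj_of_sign_eq_fin_three
    ((sign_of_mem_prodSet htr hf).trans (sign_of_mem_prodSet htr hg).symm)
    (iff_of_false (ne_of_mem_of_not_mem hf h1) (ne_of_mem_of_not_mem hg h1))
end FinThree

theorem stmt_11 (u : List (Equiv.Perm (Fin 3)))
    (htr : IsTranspositional u)
    (hcov : ∀ v : Fin 3, ∃ g ∈ u, v ∈ g.support) :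
    ConjInv u ↔
      (Odd u.length ∨
        ((Equiv.swap (0 : Fin 3) 1 ∈ u ∧ Equiv.swap (1 : Fin 3) 2 ∈ u ∧
            Equiv.swap (0 : Fin 3) 2 ∉ u ∧
            (u.count (Equiv.swap (0 : Fin 3) 1) = 1 ∨
              u.count (Equiv.swap (1 : Fin 3) 2) = 1)) ∨
         (Equiv.swap (0 : Fin 3) 1 ∈ u ∧ Equiv.swap (0 : Fin 3) 2 ∈ u ∧
            Equiv.swap (1 : Fin 3) 2 ∉ u ∧
            (u.count (Equiv.swap (0 : Fin 3) 1) = 1 ∨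
              u.count (Equiv.swap (0 : Fin 3) 2) = 1)) ∨
         (Equiv.swap (1 : Fin 3) 2 ∈ u ∧ Equiv.swap (0 : Fin 3) 2 ∈ u ∧
            Equiv.swap (0 : Fin 3) 1 ∉ u ∧
            (u.count (Equiv.swap (1 : Fin 3) 2) = 1 ∨
              u.count (Equiv.swap (0 : Fin 3) 2) = 1)))) := by
  refine ⟨fun hci => or_iff_not_imp_left.mpr fun hodd => ?_, ?_⟩
  · by_contra htwo
    have heven := Nat.not_odd_iff_even.mp hodd
    obtain ⟨g, hg, hg1⟩ := exists_ne_one_mem_prodSet htr hcov heven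
    exact hg1 (isConj_one_right.mp
      (hci 1 (one_mem_prodSet_of_not_twoKindsOneOnce htr hcov heven htwo) g hg))
  · rintro (hodd | htwo)
    · exact conjInv_of_one_notMem_prodSet htr (one_notMem_prodSet_of_odd htr hodd)
    · exact conjInv_of_one_notMem_prodSet htr (one_notMem_prodSet_of_twoKindsOneOnce htr htwo)
end

section
/- Let n ≥ 4 and let u be a transpositional sequence on Fin n whose graph G(u) is a tree on the whole vertex set Fin n. Suppose the transposition (0 1) occurs exactly twice in u and that the edge {0,1} is not a twig of G(u), i.e., both 0 and 1 have degree at least 2 in G(u). Then u is not conjugacy invariant. -/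
/-!
Removing the edge `{0, 1}` splits the tree into a side `S ∋ 0` and a side `Sᶜ ∋ 1`, and every
transposition of `u` other than `σ = (0 1)` moves points of one side only. Let `(0 z)` and
`(1 w)` be edges on either side. If the `S`-part can be ordered so that its product `f` moves `0`,
and the `Sᶜ`-part so that its product `g` moves `1`, then `σ f σ g` moves one point fewer than
`σ σ f g = f g`. Otherwise one part, say the `S`-part, is `(0 z)` and a product `α` swapping
`0` and `z`; then `(0 z) α` fixes `0`, `z` and `1`, so moving both copies of `σ` around `α`
multiplies `(0 z) α g` by a 3-cycle on `0, z, 1`, which moves strictly more points. Products whose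
supports differ in size are not conjugate.
-/

open Equiv Equiv.Perm MulAction

section FixingSubgroup

variable {α : Type*}

lemma apply_mem_iff_of_mem_fixingSubgroup_compl {S : Set α} {f : Perm α}
    (hf : f ∈ fixingSubgroup (Perm α) Sᶜ) (v : α) : f v ∈ S ↔ v ∈ S := by
  simp only [mem_fixingSubgroup_iff, Set.mem_compl_iff, Perm.smul_def] at hf
  by_cases hv : v ∈ S
  · refine iff_of_true (by_contra fun hfv => ?_) hv
    exact (f.injective (hf _ hfv) ▸ hfv) hv
  · rw [hf v hv]

variable [DecidableEq α] {x y x' : α}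

lemma swap_mem_fixingSubgroup_compl {S : Set α} {p q : α} (hp : p ∈ S) (hq : q ∈ S) :
    swap p q ∈ fixingSubgroup (Perm α) Sᶜ :=
  (mem_fixingSubgroup_iff _).2 fun _ hv =>
    swap_apply_of_ne_of_ne (fun h => hv (h ▸ hp)) (fun h => hv (h ▸ hq))

lemma swap_notMem_fixingSubgroup {T : Set α} {p q : α} (hp : p ∈ T) (hpq : p ≠ q) :
    swap p q ∉ fixingSubgroup (Perm α) T := fun h =>
  hpq ((swap_apply_left p q).symm.trans ((mem_fixingSubgroup_iff _).1 h p hp)).symm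

lemma exists_perm_cons_swap_prod_apply_ne {L : List (Perm α)}
    (h : ¬(L.prod x = y ∧ L.prod y = x)) :
    ∃ L' : List (Perm α), L'.Perm (swap x y :: L) ∧ L'.prod x ≠ x := by
  by_cases hLx : L.prod x = y
  · refine ⟨L ++ [swap x y], List.perm_append_comm, ?_⟩
    simpa using fun hLy => h ⟨hLx, hLy⟩
  · refine ⟨swap x y :: L, .refl _, ?_⟩
    simpa [swap_apply_eq_iff] using hLx

variable [Fintype α] {S : Set α} {f g : Perm α}

lemma support_swap_mul_mul_swap_mul (hf : f ∈ fixingSubgroup (Perm α) Sᶜ)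
    (hg : g ∈ fixingSubgroup (Perm α) S) (hx : x ∈ S) (hx' : x' ∉ S) (hfx : f x ≠ x)
    (hgx' : g x' ≠ x') :
    (swap x x' * f * swap x x' * g).support = (f * g).support.erase x := by
  have hfS := apply_mem_iff_of_mem_fixingSubgroup_compl hf
  have hgS := apply_mem_iff_of_mem_fixingSubgroup_compl (compl_compl S ▸ hg)
  simp only [mem_fixingSubgroup_iff, Perm.smul_def] at hf hg
  ext v
  simp only [mem_support, Finset.mem_erase, mul_apply, swap_apply_def]
  grind

/-- `swap x y * f` fixes `x`, `y` and `x'`, so it commutes with `swap x x'`: the right-hand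
product is a 3-cycle on `x, y, x'` times the left-hand one. -/
lemma support_ssubset_swap_mul_swap_mul_mul_swap_mul (hf : f ∈ fixingSubgroup (Perm α) Sᶜ)
    (hg : g ∈ fixingSubgroup (Perm α) S) (hx : x ∈ S) (hy : y ∈ S) (hx' : x' ∉ S) (hxy : x ≠ y)
    (hfx : f x = y) (hfy : f y = x) :
    (swap x y * f * g).support ⊂ (swap x y * swap x x' * f * swap x x' * g).support := by
  have hfS := apply_mem_iff_of_mem_fixingSubgroup_compl hf
  have hgS := apply_mem_iff_of_mem_fixingSubgroup_compl (compl_compl S ▸ hg)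
  simp only [mem_fixingSubgroup_iff, Perm.smul_def] at hf hg
  refine (Finset.ssubset_iff_of_subset fun v => ?_).2 ⟨x, ?_, ?_⟩
  all_goals simp only [mem_support, mul_apply, swap_apply_def]
  all_goals grind

end FixingSubgroup

section Rearrangements

variable {α : Type*} [DecidableEq α] [Fintype α]

def ProdSupportCardVaries (l : List (Perm α)) : Prop :=
  ∃ r₁ r₂ : List (Perm α), r₁.Perm l ∧ r₂.Perm l ∧ r₁.prod.support.card ≠ r₂.prod.support.card

lemma ProdSupportCardVaries.of_perm {l l' : List (Perm α)} (h : ProdSupportCardVaries l)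
    (hl : l.Perm l') : ProdSupportCardVaries l' :=
  let ⟨r₁, r₂, h₁, h₂, hne⟩ := h
  ⟨r₁, r₂, h₁.trans hl, h₂.trans hl, hne⟩

variable {S : Set α} {x y x' y' : α} {M N : List (Perm α)}

lemma prodSupportCardVaries_of_prod_swap (hx : x ∈ S) (hy : y ∈ S) (hx' : x' ∉ S)
    (hy' : y' ∉ S) (hxy : x ≠ y) (hM : ∀ g ∈ M, g ∈ fixingSubgroup (Perm α) Sᶜ)
    (hN : ∀ g ∈ N, g ∈ fixingSubgroup (Perm α) S) (hMx : M.prod x = y) (hMy : M.prod y = x) :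
    ProdSupportCardVaries (swap x x' :: swap x x' :: (swap x y :: M ++ swap x' y' :: N)) := by
  have hψ : swap x' y' * N.prod ∈ fixingSubgroup (Perm α) S :=
    mul_mem (compl_compl S ▸ swap_mem_fixingSubgroup_compl hx' hy') (list_prod_mem hN)
  refine ⟨_, swap x y :: swap x x' :: M ++ swap x x' :: swap x' y' :: N, .refl _,
    List.perm_middle.trans (.cons _ (.append_right _ (.swap _ _ _))), ?_⟩
  have hlt := Finset.card_lt_card <| support_ssubset_swap_mul_swap_mul_mul_swap_mul
    (list_prod_mem hM) hψ hx hy hx' hxy hMx hMy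
  simp only [List.prod_cons, List.prod_append, swap_mul_self_mul, mul_assoc] at hlt ⊢
  exact hlt.ne

lemma prodSupportCardVaries (hx : x ∈ S) (hy : y ∈ S) (hx' : x' ∉ S) (hy' : y' ∉ S)
    (hxy : x ≠ y) (hxy' : x' ≠ y') (hM : ∀ g ∈ M, g ∈ fixingSubgroup (Perm α) Sᶜ)
    (hN : ∀ g ∈ N, g ∈ fixingSubgroup (Perm α) S) :
    ProdSupportCardVaries (swap x x' :: swap x x' :: (swap x y :: M ++ swap x' y' :: N)) := by
  by_cases hMswap : M.prod x = y ∧ M.prod y = x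
  · exact prodSupportCardVaries_of_prod_swap hx hy hx' hy' hxy hM hN hMswap.1 hMswap.2
  by_cases hNswap : N.prod x' = y' ∧ N.prod y' = x'
  · have h := prodSupportCardVaries_of_prod_swap (S := Sᶜ) hx' hy' (not_not.2 hx) (not_not.2 hy)
      hxy' (by rwa [compl_compl]) hM hNswap.1 hNswap.2
    rw [swap_comm x' x] at h
    exact h.of_perm (.cons _ (.cons _ List.perm_append_comm))
  obtain ⟨LM, hLM, hLMx⟩ := exists_perm_cons_swap_prod_apply_ne hMswap
  obtain ⟨LN, hLN, hLNx'⟩ := exists_perm_cons_swap_prod_apply_ne hNswap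
  have hLMfix : LM.prod ∈ fixingSubgroup (Perm α) Sᶜ := list_prod_mem fun g hg => by
    rcases List.mem_cons.1 (hLM.subset hg) with rfl | hg
    exacts [swap_mem_fixingSubgroup_compl hx hy, hM g hg]
  have hLNfix : LN.prod ∈ fixingSubgroup (Perm α) S := list_prod_mem fun g hg => by
    rcases List.mem_cons.1 (hLN.subset hg) with rfl | hg
    exacts [compl_compl S ▸ swap_mem_fixingSubgroup_compl hx' hy', hN g hg]
  refine ⟨swap x x' :: LM ++ swap x x' :: LN, swap x x' :: swap x x' :: (LM ++ LN),
    List.perm_middle.trans (.cons _ (.cons _ (hLM.append hLN))),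
    .cons _ (.cons _ (hLM.append hLN)), ?_⟩
  have hsupp := support_swap_mul_mul_swap_mul hLMfix hLNfix hx hx' hLMx hLNx'
  have hmem : x ∈ (LM.prod * LN.prod).support := by
    have hLNx : LN.prod x = x := (mem_fixingSubgroup_iff _).1 hLNfix x hx
    rwa [mem_support, mul_apply, hLNx]
  simp only [List.prod_cons, List.prod_append, swap_mul_self_mul, mul_assoc] at hsupp ⊢
  rw [hsupp, Finset.card_erase_of_mem hmem]
  exact Nat.sub_one_lt (Finset.card_ne_zero_of_mem hmem) |>.ne

end Rearrangements

lemma List.exists_perm_cons_cons_cons_append_cons {β : Type*} [DecidableEq β] {l : List β}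
    {a b c : β} (P : β → Prop) [DecidablePred P] (hcount : l.count a = 2) (hb : b ∈ l)
    (hc : c ∈ l) (hba : b ≠ a) (hca : c ≠ a) (hPb : P b) (hPc : ¬P c) :
    ∃ M N : List β, l.Perm (a :: a :: (b :: M ++ c :: N)) ∧
      (∀ g ∈ M, g ∈ l ∧ g ≠ a ∧ P g) ∧ (∀ g ∈ N, g ∈ l ∧ g ≠ a ∧ ¬P g) := by
  set r := l.filter (· ≠ a)
  have hl : l.Perm (a :: a :: r) := by
    have h := List.filter_append_perm (· = a) l
    rw [List.filter_eq, hcount] at h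
    simpa [r] using h.symm
  have hr := List.filter_append_perm P r
  have hbM : b ∈ r.filter P := by simp [r, hb, hba, hPb]
  have hcN : c ∈ r.filter (fun g => !decide (P g)) := by simp [r, hc, hca, hPc]
  refine ⟨(r.filter P).erase b, (r.filter (fun g => !decide (P g))).erase c,
    hl.trans (.cons _ (.cons _ ?_)), fun g hg => ?_, fun g hg => ?_⟩
  · exact hr.symm.trans ((List.perm_cons_erase hbM).append (List.perm_cons_erase hcN))
  all_goals
    have hgr := List.mem_of_mem_erase hg
    simp only [r, List.mem_filter, decide_eq_true_eq, Bool.not_eq_true',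
      decide_eq_false_iff_not] at hgr
    tauto

lemma sym2_ne_of_swap_ne {α : Type*} [DecidableEq α] {p q a b : α}
    (h : swap p q ≠ swap a b) : s(p, q) ≠ s(a, b) := by
  intro heq
  rcases Sym2.eq_iff.1 heq with ⟨rfl, rfl⟩ | ⟨rfl, rfl⟩
  exacts [h rfl, h (swap_comm _ _)]

lemma SimpleGraph.Adj.reachable_iff {V : Type*} {G : SimpleGraph V} {a p q : V}
    (h : G.Adj p q) : G.Reachable a p ↔ G.Reachable a q :=
  ⟨fun hp => hp.trans h.reachable, fun hq => hq.trans h.symm.reachable⟩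

section TranspositionalSequence

variable {n : ℕ} {u : List (Perm (Fin n))}

lemma exists_separating_set_of_isAcyclic (hu : (TranspGraph u).IsAcyclic) {a b : Fin n}
    (hab : (TranspGraph u).Adj a b) :
    ∃ S : Set (Fin n), a ∈ S ∧ b ∉ S ∧
      ∀ p q, (TranspGraph u).Adj p q → swap p q ≠ swap a b → (p ∈ S ↔ q ∈ S) :=
  ⟨{v | ((TranspGraph u).deleteEdges {s(a, b)}).Reachable a v}, .refl a,
    SimpleGraph.isAcyclic_iff_forall_adj_isBridge.1 hu hab,
    fun _ _ hpq hne => SimpleGraph.Adj.reachable_iff <|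
      (SimpleGraph.deleteEdges_adj ..).2 ⟨hpq, sym2_ne_of_swap_ne hne⟩⟩

lemma mem_fixingSubgroup_or_of_isTranspositional (hu : IsTranspositional u) {S : Set (Fin n)}
    {σ : Perm (Fin n)} (hS : ∀ p q, (TranspGraph u).Adj p q → swap p q ≠ σ → (p ∈ S ↔ q ∈ S))
    {g : Perm (Fin n)} (hg : g ∈ u) (hgσ : g ≠ σ) :
    g ∈ fixingSubgroup (Perm (Fin n)) Sᶜ ∨ g ∈ fixingSubgroup (Perm (Fin n)) S := by
  obtain ⟨p, q, hpq, rfl⟩ := hu g hg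
  have hpqS := hS p q ⟨hpq, hg⟩ hgσ
  by_cases hp : p ∈ S
  · exact .inl (swap_mem_fixingSubgroup_compl hp (hpqS.1 hp))
  · exact .inr (compl_compl S ▸ swap_mem_fixingSubgroup_compl hp (hpqS.not.1 hp))

lemma not_conjInv_of_prodSupportCardVaries (h : ProdSupportCardVaries u) : ¬ConjInv u :=
  fun hu =>
    let ⟨r₁, r₂, h₁, h₂, hne⟩ := h
    let ⟨_, hc⟩ := isConj_iff.1 (hu _ ⟨r₁, h₁, rfl⟩ _ ⟨r₂, h₂, rfl⟩)
    hne (hc ▸ card_support_conj).symm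

end TranspositionalSequence

theorem stmt_13_general (n : ℕ) (hn : 4 ≤ n) [NeZero n] (u : List (Equiv.Perm (Fin n)))
    (htr : IsTranspositional u)
    (htree : (TranspGraph u).IsTree)
    (hcount : u.count (Equiv.swap (0 : Fin n) 1) = 2)
    (hdeg0 : ∃ z : Fin n, z ≠ 1 ∧ (TranspGraph u).Adj 0 z)
    (hdeg1 : ∃ z : Fin n, z ≠ 0 ∧ (TranspGraph u).Adj 1 z) :
    ¬ ConjInv u := by
  classical
  obtain ⟨z, hz1, h0z⟩ := hdeg0
  obtain ⟨w, hw0, h1w⟩ := hdeg1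
  have h01 : (0 : Fin n) ≠ 1 := by simp [Fin.ext_iff, Nat.mod_eq_of_lt (by omega : 1 < n)]
  have hσ : swap (0 : Fin n) 1 ∈ u := List.count_pos_iff.1 (by omega)
  have hz : swap 0 z ≠ swap (0 : Fin n) 1 := fun h => hz1 (swap_injective_of_left 0 h)
  have hw : swap 1 w ≠ swap (0 : Fin n) 1 := fun h =>
    hw0 (swap_injective_of_left 1 (h.trans (swap_comm 0 1)))
  obtain ⟨S, h0S, h1S, hS⟩ := exists_separating_set_of_isAcyclic htree.isAcyclic ⟨h01, hσ⟩
  have hzS : z ∈ S := (hS 0 z h0z hz).1 h0S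
  have hwS : w ∉ S := fun hwS => h1S ((hS 1 w h1w hw).2 hwS)
  obtain ⟨M, N, hu, hM, hN⟩ := List.exists_perm_cons_cons_cons_append_cons
    (· ∈ fixingSubgroup (Perm (Fin n)) Sᶜ) hcount h0z.2 h1w.2 hz hw
    (swap_mem_fixingSubgroup_compl h0S hzS) (swap_notMem_fixingSubgroup h1S h1w.1)
  refine not_conjInv_of_prodSupportCardVaries (.of_perm ?_ hu.symm)
  refine prodSupportCardVaries h0S hzS h1S hwS h0z.1 h1w.1 (fun g hg => (hM g hg).2.2)
    fun g hg => ?_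
  obtain ⟨hgu, hgσ, hgS⟩ := hN g hg
  exact (mem_fixingSubgroup_or_of_isTranspositional htr hS hgu hgσ).resolve_left hgS

theorem stmt_13 (n : ℕ) (hn : 4 ≤ n) [NeZero n] (u : List (Equiv.Perm (Fin n)))
    (htr : IsTranspositional u)
    (hcov : ∀ v : Fin n, ∃ g ∈ u, v ∈ g.support)
    (htree : (TranspGraph u).IsTree)
    (hcount : u.count (Equiv.swap (0 : Fin n) 1) = 2)
    (hdeg0 : ∃ z : Fin n, z ≠ 1 ∧ (TranspGraph u).Adj 0 z)
    (hdeg1 : ∃ z : Fin n, z ≠ 0 ∧ (TranspGraph u).Adj 1 z) :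
    ¬ ConjInv u :=
  stmt_13_general n hn u htr htree hcount hdeg0 hdeg1
end

section
/- Let n ≥ 3 and let σ(n) denote the list of transpositions [(0 1), (1 2), …, (n−2 n−1), (n−1 0)] of Fin n. For every nonempty proper sublist h of the list [0, 1, …, n−1] there exists a rearrangement f of σ(n) whose left-to-right composition equals (cycle determined by h) composed with the inverse of (cycle determined by h'), where h' is the sublist of [0, 1, …, n−1] complementary to h. -/
open Fin.NatCast in
/-- `τ(n) = [(0 1), (1 2), …, (n−2 n−1)]` as a list of transpositions of `Fin n`. -/
def tauList (n : ℕ) [NeZero n] : List (Equiv.Perm (Fin n)) :=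
  (List.range (n - 1)).map (fun i => Equiv.swap ((i : ℕ) : Fin n) (((i + 1 : ℕ)) : Fin n))

open Fin.NatCast in
/-- `σ(n) = τ(n) ++ [(n−1 0)]`. -/
def sigmaList (n : ℕ) [NeZero n] : List (Equiv.Perm (Fin n)) :=
  tauList n ++ [Equiv.swap (((n - 1 : ℕ)) : Fin n) (0 : Fin n)]

/-!
Call the points of `h` white and the others black. Multiply the edges `(xᵢ₋₁ xᵢ)` of a path
`x₀ x₁ … xₘ` one at a time, starting from the far end, putting the edge on the left of the
product so far when `xᵢ` is white and on the right when `xᵢ` is black: the result is the single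
cycle that leaves `x₀`, runs through the white points in order and returns through the black
points in reverse order. Now rotate the cycle `0 1 … n-1` so that it starts with a black point `v`
followed by a white point `y`. The path `y … v` gives the cycle `y (white points) v (black points
reversed)`, and the remaining edge `(v y)`, multiplied on the left, cuts it at `v` and `y` into
the increasing cycle on the white points and the decreasing cycle on the black points.
-/

open List

section Lists

variable {α : Type*}

theorem filter_append_reverse_filter_perm (p : α → Bool) (l : List α) :
    l.filter p ++ (l.filter (!p ·)).reverse ~ l :=
  ((reverse_perm _).append_left _).trans (filter_append_perm p l)

theorem List.Sublist.filter_mem_eq [DecidableEq α] {l L : List α} (hs : l <+ L) (hL : L.Nodup) :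
    L.filter (· ∈ l) = l := by
  have hl : l <+ L.filter (· ∈ l) := by
    simpa [filter_eq_self.mpr fun x hx => decide_eq_true hx] using hs.filter (· ∈ l)
  exact (hl.eq_of_length_le ((hL.filter _).subperm fun x hx => by simpa using
    (mem_filter.mp hx).2).length_le).symm

theorem List.IsRotated.filter {l l' : List α} (h : l ~r l') (p : α → Bool) :
    l.filter p ~r l'.filter p := by
  obtain ⟨n, rfl⟩ := h
  conv_lhs => rw [← take_append_drop (n % l.length) l]
  rw [rotate_eq_drop_append_take_mod, filter_append, filter_append]
  exact isRotated_append

theorem exists_eq_append_cons_cons {p : α → Bool} :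
    ∀ {x : α} {l : List α}, p x = false → (∃ z ∈ l, p z) →
      ∃ a v y r, x :: l = a ++ v :: y :: r ∧ p v = false ∧ p y
  | _, [], _, ⟨_, hz, _⟩ => absurd hz not_mem_nil
  | x, y :: l, hx, ⟨z, hz, hpz⟩ => by
    cases hy : p y
    · have hzl : z ∈ l := (mem_cons.mp hz).resolve_left (by rintro rfl; simp_all)
      obtain ⟨a, v, w, r, e, hv, hw⟩ := exists_eq_append_cons_cons hy ⟨z, hzl, hpz⟩
      exact ⟨x :: a, v, w, r, by rw [e]; rfl, hv, hw⟩
    · exact ⟨[], x, y, l, rfl, hx, hy⟩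

theorem exists_isRotated_cons_cons {l : List α} {p : α → Bool}
    (hp : ∃ x ∈ l, p x) (hnp : ∃ x ∈ l, p x = false) :
    ∃ v y r, l ~r v :: y :: r ∧ p v = false ∧ p y := by
  obtain ⟨x, hx, hpx⟩ := hnp
  obtain ⟨s, t, rfl⟩ := append_of_mem hx
  obtain ⟨z, hz, hpz⟩ := hp
  have hz' : z ∈ t ++ s := by
    rw [mem_append, mem_cons] at hz
    rw [mem_append]
    rcases hz with hz | rfl | hz <;> simp_all
  obtain ⟨a, v, y, r, e, hv, hy⟩ := exists_eq_append_cons_cons hpx ⟨z, hz', hpz⟩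
  have e' : x :: t ++ s = a ++ v :: y :: r := by rw [cons_append, e]
  exact ⟨v, y, r ++ a, isRotated_append.trans (e' ▸ isRotated_append), hv, hy⟩

end Lists

section FormPerm

variable {α : Type*} [DecidableEq α]

theorem formPerm_map_equiv (σ : Equiv.Perm α) : ∀ l : List α,
    formPerm (l.map σ) = σ * formPerm l * σ⁻¹
  | [] | [_] => by simp
  | x :: y :: l => by
    rw [map_cons, map_cons, formPerm_cons_cons, ← map_cons, formPerm_map_equiv σ (y :: l),
      Equiv.swap_apply_apply, formPerm_cons_cons]
    group

theorem swap_mul_formPerm_cons_mul_swap {x y : α} {l : List α} (hx : x ∉ l) (hy : y ∉ l) :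
    Equiv.swap x y * formPerm (x :: l) * Equiv.swap x y = formPerm (y :: l) := by
  have hl : l.map (Equiv.swap x y) = l := (map_congr_left fun z hz => Equiv.swap_apply_of_ne_of_ne
    (ne_of_mem_of_not_mem hz hx) (ne_of_mem_of_not_mem hz hy)).trans (map_id l)
  simpa [hl] using (formPerm_map_equiv (Equiv.swap x y) (x :: l)).symm

theorem formPerm_append_cons (l₁ l₂ : List α) (b : α) :
    formPerm (l₁ ++ b :: l₂) = formPerm (l₁ ++ [b]) * formPerm (b :: l₂) := by
  induction l₁ with
  | nil => simp
  | cons a l₁ ih =>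
    cases l₁ with
    | nil => simp
    | cons c l₁ => simp only [cons_append, formPerm_cons_cons] at ih ⊢; rw [ih, mul_assoc]

theorem formPerm_cons_append_singleton_s17 {x y : α} {l : List α} (h : (y :: x :: l).Nodup) :
    formPerm (x :: (l ++ [y])) = formPerm (y :: l) * Equiv.swap x y := by
  obtain ⟨⟨-, hy⟩, hx, -⟩ := by simpa using h
  rw [← swap_mul_formPerm_cons_mul_swap hx hy, mul_assoc, Equiv.swap_mul_self, mul_one,
    Equiv.swap_comm, ← formPerm_cons_cons, ← formPerm_rotate_one _ h]
  simp

theorem swap_mul_formPerm_cons_append_cons {y v : α} {l₁ l₂ : List α}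
    (h : (y :: (l₁ ++ v :: l₂)).Nodup) :
    Equiv.swap v y * formPerm (y :: (l₁ ++ v :: l₂)) =
      formPerm (y :: l₁) * formPerm (v :: l₂) := by
  have h' : (v :: y :: l₁).Nodup := by
    simp only [nodup_cons, mem_cons, mem_append, not_or] at h ⊢
    grind
  obtain ⟨⟨-, hv⟩, hy, -⟩ := by simpa using h'
  rw [← cons_append, formPerm_append_cons, cons_append, formPerm_cons_append_singleton_s17 h',
    ← mul_assoc, ← mul_assoc, Equiv.swap_comm y v, swap_mul_formPerm_cons_mul_swap hv hy]

end FormPerm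

section PathWord

variable {α : Type*} [DecidableEq α] (p : α → Bool)

def pathWord : List α → List (Equiv.Perm α)
  | x :: y :: l =>
    if p y then Equiv.swap x y :: pathWord (y :: l) else pathWord (y :: l) ++ [Equiv.swap x y]
  | _ => []

theorem pathWord_perm : ∀ l : List α, pathWord p l ~ zipWith Equiv.swap l l.tail
  | [] | [_] => by simp [pathWord]
  | x :: y :: l => by
    rw [pathWord]
    split
    · exact (pathWord_perm (y :: l)).cons _
    · exact (perm_append_singleton _ _).trans ((pathWord_perm (y :: l)).cons _)

theorem prod_pathWord (x : α) (l : List α) (h : (x :: l).Nodup) :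
    (pathWord p (x :: l)).prod = formPerm (x :: (l.filter p ++ (l.filter (!p ·)).reverse)) := by
  induction l generalizing x with
  | nil => simp [pathWord]
  | cons y l ih =>
    rw [pathWord]
    split_ifs with hy
    · rw [prod_cons, ih y h.of_cons, filter_cons_of_pos hy, filter_cons_of_neg (by simpa using hy),
        cons_append, formPerm_cons_cons]
    · have hM : (y :: x :: (l.filter p ++ (l.filter (!p ·)).reverse)).Nodup :=
        (((filter_append_reverse_filter_perm p l).cons x).cons y).nodup_iff.mpr
          ((Perm.swap x y l).nodup_iff.mpr h)
      rw [prod_append, prod_singleton, ih y h.of_cons, filter_cons_of_neg hy,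
        filter_cons_of_pos (by simpa using hy), reverse_cons, ← append_assoc,
        formPerm_cons_append_singleton_s17 hM]

end PathWord

section CycleEdges

variable {α : Type*} [DecidableEq α]

def cycleEdges (l : List α) : List (Equiv.Perm α) :=
  zipWith Equiv.swap l (l.rotate 1)

theorem cycleEdges_cons (v : α) (l : List α) :
    cycleEdges (v :: l) = zipWith Equiv.swap (v :: (l ++ [v])) (l ++ [v]) := by
  rw [cycleEdges, rotate_cons_succ, rotate_zero, ← cons_append, ← (l ++ [v]).append_nil,
    zipWith_append (by simp)]
  simp

theorem List.IsRotated.cycleEdges {l l' : List α} (h : l ~r l') :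
    cycleEdges l ~r cycleEdges l' := by
  obtain ⟨n, rfl⟩ := h
  refine ⟨n, ?_⟩
  rw [_root_.cycleEdges, _root_.cycleEdges, zipWith_rotate_distrib _ _ _ _ (by simp),
    rotate_rotate, rotate_rotate, add_comm]

theorem exists_perm_cycleEdges_prod_eq {l : List α} (hl : l.Nodup) {p : α → Bool}
    (hp : ∃ x ∈ l, p x) (hnp : ∃ x ∈ l, p x = false) :
    ∃ f, f ~ cycleEdges l ∧
      f.prod = formPerm (l.filter p) * (formPerm (l.filter (!p ·)))⁻¹ := by
  obtain ⟨v, y, r, hrot, hv, hy⟩ := exists_isRotated_cons_cons hp hnp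
  have hnd : (v :: y :: r).Nodup := hrot.nodup_iff.mp hl
  refine ⟨Equiv.swap v y :: pathWord p (y :: (r ++ [v])), ?_, ?_⟩
  · refine ((pathWord_perm p _).cons _).trans ?_
    have := hrot.symm.cycleEdges.perm
    rwa [cycleEdges_cons] at this
  have hnd₁ : (y :: (r ++ [v])).Nodup := (isRotated_concat v (y :: r)).nodup_iff.mpr hnd
  have hnd₂ : (y :: (r.filter p ++ v :: (r.filter (!p ·)).reverse)).Nodup :=
    (((perm_middle.trans ((filter_append_reverse_filter_perm p r).cons v)).cons y).trans
      (Perm.swap v y r)).nodup_iff.mpr hnd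
  calc Equiv.swap v y * (pathWord p (y :: (r ++ [v]))).prod
      = Equiv.swap v y * formPerm (y :: (r.filter p ++ v :: (r.filter (!p ·)).reverse)) := by
        rw [prod_pathWord p y _ hnd₁]; simp [hv]
    _ = formPerm (y :: r.filter p) * formPerm (v :: (r.filter (!p ·)).reverse) :=
        swap_mul_formPerm_cons_append_cons hnd₂
    _ = formPerm (l.filter p) * (formPerm (l.filter (!p ·)))⁻¹ := by
        rw [← formPerm_reverse, formPerm_eq_of_isRotated (hl.filter _) (hrot.filter p),
          formPerm_eq_of_isRotated (nodup_reverse.mpr (hl.filter _))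
            (hrot.filter _).reverse, filter_cons_of_neg (by simp [hv]), filter_cons_of_pos hy,
          filter_cons_of_pos (by simp [hv]), filter_cons_of_neg (by simp [hy]), reverse_cons,
          formPerm_eq_of_isRotated (hnd₂.sublist ((sublist_append_right _ _).cons _))
            (isRotated_concat v _).symm]

end CycleEdges

theorem cycleEdges_finRange (n : ℕ) [NeZero n] : cycleEdges (finRange n) = sigmaList n := by
  have hn := NeZero.pos n
  have hlen : (sigmaList n).length = n := by simp [sigmaList, tauList]; omega
  refine ext_getElem (by simp [cycleEdges, hlen]) fun i _ hi => ?_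
  rw [hlen] at hi
  simp only [cycleEdges, getElem_zipWith, getElem_rotate, getElem_finRange, sigmaList, tauList,
    getElem_append, length_map, length_range]
  split_ifs with h
  · simp only [getElem_map, getElem_range]
    congr 1 <;> ext <;> simp [Fin.val_natCast, Nat.mod_eq_of_lt hi]
  · obtain rfl : i = n - 1 := by omega
    simp only [Nat.sub_add_cancel hn, Nat.sub_self, getElem_singleton]
    congr 1 <;> ext <;> simp [Fin.val_natCast, Nat.mod_eq_of_lt hi]

theorem stmt_17_general (n : ℕ) [NeZero n]
    (h : List (Fin n)) (hne : h ≠ []) (hsub : h.Sublist (List.finRange n))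
    (hprop : h ≠ List.finRange n) :
    ∃ f : List (Equiv.Perm (Fin n)), f.Perm (sigmaList n) ∧
      f.reverse.prod =
        List.formPerm h * (List.formPerm ((List.finRange n).diff h))⁻¹ := by
  have hS : (finRange n).filter (· ∈ h) = h := hsub.filter_mem_eq (nodup_finRange n)
  have hT : (finRange n).filter (fun x => !decide (x ∈ h)) = (finRange n).diff h := by
    simp [(nodup_finRange n).sdiff_eq_filter]
  obtain ⟨f, hf, hprod⟩ := exists_perm_cycleEdges_prod_eq (nodup_finRange n) (p := (· ∈ h))
    (by obtain ⟨x, hx⟩ := exists_mem_of_ne_nil h hne; exact ⟨x, hsub.subset hx, by simpa⟩)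
    (by
      by_contra! hall
      exact hprop (hS.symm.trans (filter_eq_self.mpr fun x hx => by simpa using hall x hx)))
  refine ⟨f.reverse, (reverse_perm f).trans (cycleEdges_finRange n ▸ hf), ?_⟩
  rw [reverse_reverse, hprod, hS, hT]

theorem stmt_17 (n : ℕ) (hn : 3 ≤ n) [NeZero n]
    (h : List (Fin n)) (hne : h ≠ []) (hsub : h.Sublist (List.finRange n))
    (hprop : h ≠ List.finRange n) :
    ∃ f : List (Equiv.Perm (Fin n)), f.Perm (sigmaList n) ∧
      f.reverse.prod =
        List.formPerm h * (List.formPerm ((List.finRange n).diff h))⁻¹ :=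
  stmt_17_general n h hne hsub hprop
end
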